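/- arXiv:1902.02226 — 3 statements merged into one kernel-verified Lean document; each statement's English description precedes it below -/
import Mathlib

section
/- Let X=(X_1,…,X_d) be a random vector in S=[0,∞)^d, I⊆{1,…,d} nonempty, and assume the tail-balance condition: there is a function b, regularly varying at infinity with index α>0, with lim_{t→∞} b(t)·P(X_i>t)=c_i∈(0,∞) for every i∈I. If for every i∈I the conditional law of X/t given {X_i>t} converges weakly as t→∞ to the law of a random vector Y_i=(Y_{i,1},…,Y_{i,d}) on S, then Y_{i,i}≥1 almost surely and, for every i∈I, the conditional law of X/X_i given {X_i>t} converges weakly as t→∞ to the law of Θ_i := Y_i/Y_{i,i}. -/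
open MeasureTheory ProbabilityTheory Filter Topology

/-- `b` is regularly varying at infinity with index `ρ`. -/
def RegularlyVarying (b : ℝ → ℝ) (ρ : ℝ) : Prop :=
  (∀ᶠ t in atTop, 0 < b t) ∧
    ∀ l : ℝ, 0 < l → Tendsto (fun t => b (l * t) / b t) atTop (𝓝 (l ^ ρ))

/-!
On `{X_i > t}` the `i`-th coordinate of `X / t` exceeds `1`, so the limit law charges no mass
below the closed half-space `{y_i ≥ 1}`, as a continuous ramp vanishing exactly there shows.
On that half-space `y ↦ y / y_i` agrees with the continuous map `y ↦ y / max y_i 1`, which sends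
`X / t` to `X / X_i` on `{X_i > t}`; testing the hypothesis against `f ∘ (y ↦ y / max y_i 1)`
gives the convergence of `X / X_i`.
-/

open scoped BoundedContinuousFunction

lemma integral_cond_congr {Ω E : Type*} [MeasurableSpace Ω] [NormedAddCommGroup E]
    [NormedSpace ℝ E] (μ : Measure Ω) {s : Set Ω} (hs : MeasurableSet s) {g₁ g₂ : Ω → E}
    (h : ∀ ω ∈ s, g₁ ω = g₂ ω) :
    ∫ ω, g₁ ω ∂(μ[|s]) = ∫ ω, g₂ ω ∂(μ[|s]) := by
  simp only [ProbabilityTheory.cond, integral_smul_measure]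
  rw [setIntegral_congr_fun hs h]

namespace ConditionalTail

noncomputable section

variable {ι : Type*} (i : ι)

def rampBelowOne : (ι → ℝ) →ᵇ ℝ :=
  BoundedContinuousFunction.mkOfBound ⟨fun y => max 0 (min (1 - y i) 1), by fun_prop⟩ 1 <| by
    intro x y
    simp only [ContinuousMap.coe_mk, Real.dist_eq, abs_le]
    constructor <;>
      linarith [le_max_left 0 (min (1 - x i) 1), le_max_left 0 (min (1 - y i) 1),
        max_le zero_le_one (min_le_right (1 - x i) 1),
        max_le zero_le_one (min_le_right (1 - y i) 1)]

lemma rampBelowOne_apply (y : ι → ℝ) : rampBelowOne i y = max 0 (min (1 - y i) 1) := rfl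

lemma rampBelowOne_nonneg (y : ι → ℝ) : 0 ≤ rampBelowOne i y := le_max_left _ _

lemma rampBelowOne_eq_zero_iff {y : ι → ℝ} : rampBelowOne i y = 0 ↔ 1 ≤ y i := by
  rw [rampBelowOne_apply, max_eq_left_iff, min_le_iff]
  constructor
  · rintro (h | h) <;> linarith
  · exact fun h => Or.inl (by linarith)

lemma ae_one_le_of_integral_rampBelowOne_eq_zero [Countable ι] {Ω : Type*} [MeasurableSpace Ω]
    {μ : Measure Ω} [IsFiniteMeasure μ] {Y : Ω → ι → ℝ} (hY : Measurable Y)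
    (h : ∫ ω, rampBelowOne i (Y ω) ∂μ = 0) : ∀ᵐ ω ∂μ, 1 ≤ Y ω i := by
  have hint : Integrable (fun ω => rampBelowOne i (Y ω)) μ :=
    ((rampBelowOne i).integrable (μ.map Y)).comp_measurable hY
  have hzero := (integral_eq_zero_iff_of_nonneg (fun ω => rampBelowOne_nonneg i (Y ω)) hint).1 h
  filter_upwards [hzero] with ω hω
  exact (rampBelowOne_eq_zero_iff i).1 hω

def normalizeBy : C(ι → ℝ, ι → ℝ) :=
  ⟨fun y j => y j / max (y i) 1, continuous_pi fun j =>
    (continuous_apply j).div ((continuous_apply i).max continuous_const)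
      fun y => (one_pos.trans_le (le_max_right (y i) 1)).ne'⟩

lemma normalizeBy_of_one_le {y : ι → ℝ} (hy : 1 ≤ y i) :
    normalizeBy i y = fun j => y j / y i := by
  simp only [normalizeBy, ContinuousMap.coe_mk, max_eq_left hy]

variable {Ω : Type*} [MeasurableSpace Ω] (μ : Measure Ω) (X : Ω → ι → ℝ)

lemma integral_rampBelowOne_div_cond_eq_zero {t : ℝ} (ht : 0 < t)
    (hs : MeasurableSet {ω | t < X ω i}) :
    ∫ ω, rampBelowOne i (fun j => X ω j / t) ∂(μ[|{ω | t < X ω i}]) = 0 := by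
  rw [integral_cond_congr μ hs (g₂ := fun _ => (0 : ℝ)), integral_zero]
  intro ω hω
  exact (rampBelowOne_eq_zero_iff i).2 ((one_lt_div ht).2 hω).le

lemma normalizeBy_div_of_lt {t : ℝ} (ht : 0 < t) {x : ι → ℝ} (hx : t < x i) :
    normalizeBy i (fun j => x j / t) = fun j => x j / x i := by
  rw [normalizeBy_of_one_le i ((one_lt_div ht).2 hx).le]
  funext j
  exact div_div_div_cancel_right₀ ht.ne' _ _

variable {X} {Ω' : Type*} [MeasurableSpace Ω'] {μ' : Measure Ω'} [IsFiniteMeasure μ']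
  {Y : Ω' → ι → ℝ}

lemma ae_one_le_of_tendsto_cond_div [Countable ι] (hXi : Measurable fun ω => X ω i)
    (hY : Measurable Y)
    (hconv : ∀ f : (ι → ℝ) →ᵇ ℝ,
      Tendsto (fun t => ∫ ω, f (fun j => X ω j / t) ∂(μ[|{ω | t < X ω i}])) atTop
        (𝓝 (∫ ω', f (Y ω') ∂μ'))) :
    ∀ᵐ ω' ∂μ', 1 ≤ Y ω' i := by
  have hzero : ∀ᶠ t in atTop,
      ∫ ω, rampBelowOne i (fun j => X ω j / t) ∂(μ[|{ω | t < X ω i}]) = 0 := by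
    filter_upwards [eventually_gt_atTop 0] with t ht
    exact integral_rampBelowOne_div_cond_eq_zero i μ X ht (measurableSet_lt measurable_const hXi)
  refine ae_one_le_of_integral_rampBelowOne_eq_zero i hY ?_
  exact tendsto_nhds_unique (hconv (rampBelowOne i))
    (tendsto_const_nhds.congr' (hzero.mono fun _ h => h.symm))

lemma tendsto_cond_div_self_of_tendsto_cond_div [Countable ι] (hXi : Measurable fun ω => X ω i)
    (hY : Measurable Y)
    (hconv : ∀ f : (ι → ℝ) →ᵇ ℝ,
      Tendsto (fun t => ∫ ω, f (fun j => X ω j / t) ∂(μ[|{ω | t < X ω i}])) atTop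
        (𝓝 (∫ ω', f (Y ω') ∂μ')))
    (f : (ι → ℝ) →ᵇ ℝ) :
    Tendsto (fun t => ∫ ω, f (fun j => X ω j / X ω i) ∂(μ[|{ω | t < X ω i}])) atTop
      (𝓝 (∫ ω', f (fun j => Y ω' j / Y ω' i) ∂μ')) := by
  have hlimit : ∫ ω', f.compContinuous (normalizeBy i) (Y ω') ∂μ'
      = ∫ ω', f (fun j => Y ω' j / Y ω' i) ∂μ' := by
    refine integral_congr_ae ?_
    filter_upwards [ae_one_le_of_tendsto_cond_div i μ hXi hY hconv] with ω' hω'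
    simp only [BoundedContinuousFunction.compContinuous_apply, normalizeBy_of_one_le i hω']
  refine (hlimit ▸ hconv (f.compContinuous (normalizeBy i))).congr' ?_
  filter_upwards [eventually_gt_atTop 0] with t ht
  refine integral_cond_congr μ (measurableSet_lt measurable_const hXi) fun ω hω => ?_
  simp only [BoundedContinuousFunction.compContinuous_apply, normalizeBy_div_of_lt i ht hω]

end

end ConditionalTail

open ConditionalTail in
theorem Yi_to_one_component_general
    {d : ℕ} {Ω : Type*} [MeasurableSpace Ω] (μ : Measure Ω)
    (X : Ω → Fin d → ℝ) (hXmeas : Measurable X)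
    (I : Finset (Fin d))
    {Ω' : Type*} [MeasurableSpace Ω'] (μ' : Measure Ω') [IsProbabilityMeasure μ']
    (Y : Fin d → Ω' → Fin d → ℝ) (hYmeas : ∀ i, Measurable (Y i))
    (hconvY : ∀ i ∈ I, ∀ f : BoundedContinuousFunction (Fin d → ℝ) ℝ,
      Tendsto (fun t => ∫ ω, f (fun j => X ω j / t) ∂(μ[|{ω | t < X ω i}])) atTop
        (𝓝 (∫ ω', f (Y i ω') ∂μ'))) :
    ∀ i ∈ I,
      (∀ᵐ ω' ∂μ', 1 ≤ Y i ω' i) ∧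
      (∀ f : BoundedContinuousFunction (Fin d → ℝ) ℝ,
        Tendsto (fun t => ∫ ω, f (fun j => X ω j / X ω i) ∂(μ[|{ω | t < X ω i}])) atTop
          (𝓝 (∫ ω', f (fun j => Y i ω' j / Y i ω' i) ∂μ'))) := by
  intro i hi
  have hXi : Measurable fun ω => X ω i := (measurable_pi_apply i).comp hXmeas
  exact ⟨ae_one_le_of_tendsto_cond_div i μ hXi (hYmeas i) (hconvY i hi),
    tendsto_cond_div_self_of_tendsto_cond_div i μ hXi (hYmeas i) (hconvY i hi)⟩

/-- Theorem `thm:one2multi`, (c) ⟹ (a): under tail balance, if `X/t` given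
`X_i > t` converges weakly to `Y_i`, then `Y_{i,i} ≥ 1` a.s. and `X/X_i` given `X_i > t`
converges weakly to `Θ_i := Y_i / Y_{i,i}`. -/
theorem Yi_to_one_component
    {d : ℕ} {Ω : Type*} [MeasurableSpace Ω] (μ : Measure Ω) [IsProbabilityMeasure μ]
    (X : Ω → Fin d → ℝ) (hXmeas : Measurable X) (hXnn : ∀ ω i, 0 ≤ X ω i)
    (I : Finset (Fin d)) (hI : I.Nonempty)
    (b : ℝ → ℝ) (α : ℝ) (hα : 0 < α) (hb : RegularlyVarying b α)
    (c : Fin d → ℝ) (hc : ∀ i ∈ I, 0 < c i)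
    (htail : ∀ i ∈ I,
      Tendsto (fun t => b t * (μ {ω | t < X ω i}).toReal) atTop (𝓝 (c i)))
    {Ω' : Type*} [MeasurableSpace Ω'] (μ' : Measure Ω') [IsProbabilityMeasure μ']
    (Y : Fin d → Ω' → Fin d → ℝ) (hYmeas : ∀ i, Measurable (Y i))
    (hYnn : ∀ i ω' j, 0 ≤ Y i ω' j)
    (hconvY : ∀ i ∈ I, ∀ f : BoundedContinuousFunction (Fin d → ℝ) ℝ,
      Tendsto (fun t => ∫ ω, f (fun j => X ω j / t) ∂(μ[|{ω | t < X ω i}])) atTop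
        (𝓝 (∫ ω', f (Y i ω') ∂μ'))) :
    ∀ i ∈ I,
      (∀ᵐ ω' ∂μ', 1 ≤ Y i ω' i) ∧
      (∀ f : BoundedContinuousFunction (Fin d → ℝ) ℝ,
        Tendsto (fun t => ∫ ω, f (fun j => X ω j / X ω i) ∂(μ[|{ω | t < X ω i}])) atTop
          (𝓝 (∫ ω', f (fun j => Y i ω' j / Y i ω' i) ∂μ'))) :=
  Yi_to_one_component_general μ X hXmeas I μ' Y hYmeas hconvY
end

section
/- Let X=(X_1,…,X_d) be a random vector in S=[0,∞)^d, I⊆{1,…,d} nonempty, and assume the tail-balance condition: there is a function b, regularly varying at infinity with index α>0, with lim_{t→∞} b(t)·P(X_i>t)=c_i∈(0,∞) for every i∈I. Assume that for every i∈I the conditional law of X/X_i given {X_i>t} converges weakly as t→∞ to the law of a random vector Θ_i on S (with Θ_{i,i}=1 a.s.), and let ν be a tail measure of X. Then for every i∈I: ν({x∈S_{0,I} : x_i=0}) = 0 if E[Θ_{i,j}^α]=c_j/c_i for all j∈I, and ν({x∈S_{0,I} : x_i=0}) = ∞ otherwise. -/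
/-!
Fix `i ∈ I`. Testing the tail measure against functions of `x i` and `x / x i`, regular
variation of `b` and the spectral convergence give
`ν {x i > r, x k / x i > y} = c i * r^(-α) * P(Θ i k > y)`: on `{x i > 0}`, `ν` is the law of
`R • Θ i` with `R` independent of `Θ i` and `ν (R > r) = c i * r^(-α)`. Cutting the ratio
`x k / x i` along a geometric grid then gives `ν {x i > 0, x k > s} = c i * s^(-α) * E[Θ i k ^ α]`,
while `ν {x k > s} = c k * s^(-α)` and `ν` puts no mass on `{x i < 0}`. So the hyperplane part
`ν {x k > s, x i = 0} = s^(-α) * (c k - c i * E[Θ i k ^ α])` is `(-α)`-homogeneous in `s`;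
letting `s → 0`, the hyperplane has mass `0` if all these coefficients vanish and `∞` otherwise.
-/

open MeasureTheory ProbabilityTheory Filter Topology
open scoped ENNReal

/-- `ν` is a tail measure of `X` (relative to the component set `I` and the scaling
function `b`): a Borel measure concentrated on `S_{0,I} = {x : max_{i∈I} x_i > 0}`, finite
on `{x : max_{i∈I} x_i ≥ ε}` for every `ε > 0`, such that `b(t)·E[f(X/t)] → ∫ f dν` for
every bounded continuous `f` vanishing on `{x : max_{i∈I} x_i ≤ ε}` for some `ε > 0`. -/
def IsTailMeasure {d : ℕ} {Ω : Type*} [MeasurableSpace Ω] (μ : Measure Ω)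
    (X : Ω → Fin d → ℝ) (I : Finset (Fin d)) (b : ℝ → ℝ)
    (ν : Measure (Fin d → ℝ)) : Prop :=
  (∀ ε > (0:ℝ), ν {x | ∃ i ∈ I, ε ≤ x i} < ⊤) ∧
  ν {x | ¬ ∃ i ∈ I, 0 < x i} = 0 ∧
  ∀ f : BoundedContinuousFunction (Fin d → ℝ) ℝ,
    (∃ ε > (0:ℝ), ∀ x : Fin d → ℝ, (∀ i ∈ I, x i ≤ ε) → f x = 0) →
    Tendsto (fun t => b t * ∫ ω, f (fun j => X ω j / t) ∂μ) atTop (𝓝 (∫ x, f x ∂ν))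

open Set Function
open scoped BoundedContinuousFunction

noncomputable def ramp (a b : ℝ) : ℝ →ᵇ ℝ :=
  .ofNormedAddCommGroup (fun u => max 0 (min 1 ((u - a) / (b - a)))) (by fun_prop) 1 fun u => by
    rw [Real.norm_eq_abs, abs_of_nonneg (le_max_left _ _)]
    exact max_le zero_le_one (min_le_left _ _)

namespace ramp

variable {a b u : ℝ}

lemma apply (a b u : ℝ) : ramp a b u = max 0 (min 1 ((u - a) / (b - a))) := rfl

lemma nonneg (a b u : ℝ) : 0 ≤ ramp a b u := le_max_left _ _

lemma le_one (a b u : ℝ) : ramp a b u ≤ 1 := max_le zero_le_one (min_le_left _ _)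

lemma eq_zero (hab : a ≤ b) (hu : u ≤ a) : ramp a b u = 0 :=
  max_eq_left <| (min_le_right _ _).trans <|
    div_nonpos_of_nonpos_of_nonneg (sub_nonpos.2 hu) (sub_nonneg.2 hab)

lemma eq_one (hab : a < b) (hu : b ≤ u) : ramp a b u = 1 := by
  rw [apply, min_eq_left ((one_le_div (by linarith)).2 (by linarith)), max_eq_right zero_le_one]

lemma pos (hab : a < b) (hu : a < u) : 0 < ramp a b u :=
  lt_max_of_lt_right (lt_min one_pos (div_pos (sub_pos.2 hu) (sub_pos.2 hab)))

end ramp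

section IndicatorBounds

variable {α : Type*} [MeasurableSpace α] {m : Measure α} {s : Set α} {f : α → ℝ}

lemma measure_le_ofReal_integral (hs : MeasurableSet s) (hf : Integrable f m)
    (h : s.indicator 1 ≤ f) : m s ≤ ENNReal.ofReal (∫ x, f x ∂m) := by
  have hf0 : 0 ≤ f := fun x => (Set.indicator_nonneg (fun _ _ => zero_le_one) x).trans (h x)
  calc m s = ∫⁻ _ in s, 1 ∂m := (setLIntegral_one s).symm
    _ ≤ ∫⁻ x in s, ENNReal.ofReal (f x) ∂m := setLIntegral_mono' hs fun x hx => by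
        simpa [hx] using ENNReal.ofReal_le_ofReal (h x)
    _ ≤ ∫⁻ x, ENNReal.ofReal (f x) ∂m := setLIntegral_le_lintegral _ _
    _ = ENNReal.ofReal (∫ x, f x ∂m) :=
        (ofReal_integral_eq_lintegral_ofReal hf (Eventually.of_forall hf0)).symm

lemma ofReal_integral_le_measure (hs : MeasurableSet s) (hf : Integrable f m)
    (h : f ≤ s.indicator 1) : ENNReal.ofReal (∫ x, f x ∂m) ≤ m s := by
  rcases eq_or_ne (m s) ⊤ with hms | hms
  · exact hms ▸ le_top
  have hint : Integrable (s.indicator 1) m :=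
    (integrable_indicator_iff hs).2 (integrableOn_const (C := (1 : ℝ)) hms)
  calc ENNReal.ofReal (∫ x, f x ∂m) ≤ ENNReal.ofReal (∫ x, s.indicator 1 x ∂m) :=
        ENNReal.ofReal_le_ofReal (integral_mono hf hint h)
    _ = m s := by rw [integral_indicator_one hs, measureReal_def, ENNReal.ofReal_toReal hms]

end IndicatorBounds

lemma RegularlyVarying.tendsto_mul_comp_const_mul {b : ℝ → ℝ} {α : ℝ} (hb : RegularlyVarying b α)
    {g : ℝ → ℝ} {c : ℝ} (hg : Tendsto (fun t => b t * g t) atTop (𝓝 c)) {v : ℝ} (hv : 0 < v) :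
    Tendsto (fun t => b t * g (v * t)) atTop (𝓝 (c * v ^ (-α))) := by
  have hvt : Tendsto (fun t => v * t) atTop atTop := tendsto_id.const_mul_atTop hv
  have hratio : Tendsto (fun t => b t / b (v * t)) atTop (𝓝 (v ^ (-α))) := by
    simpa [Real.rpow_neg hv.le, inv_div] using (hb.2 v hv).inv₀ (Real.rpow_pos_of_pos hv α).ne'
  refine ((hg.comp hvt).mul hratio).congr' ?_
  filter_upwards [hvt.eventually hb.1] with t hbt
  simp only [Function.comp_apply]
  field_simp

lemma setIntegral_eq_toReal_mul_integral_cond {Ω : Type*} [MeasurableSpace Ω] {μ : Measure Ω}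
    [IsFiniteMeasure μ] (A : Set Ω) (F : Ω → ℝ) :
    ∫ ω in A, F ω ∂μ = (μ A).toReal * ∫ ω, F ω ∂(μ[|A]) := by
  rcases eq_or_ne (μ A) 0 with hA | hA
  · simp [Measure.restrict_eq_zero.2 hA, hA]
  rw [ProbabilityTheory.cond, integral_smul_measure, smul_eq_mul, ENNReal.toReal_inv, ← mul_assoc,
    mul_inv_cancel₀ (ENNReal.toReal_ne_zero.2 ⟨hA, measure_ne_top μ A⟩), one_mul]

lemma eq_of_forall_rpow_mul_sandwich {V A : ℝ≥0∞} {α : ℝ}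
    (h : ∀ ρ : ℝ, 1 < ρ → ENNReal.ofReal (ρ ^ (-α)) * A ≤ V ∧ V ≤ ENNReal.ofReal (ρ ^ α) * A) :
    V = A := by
  have hlim : ∀ β : ℝ, Tendsto (fun ρ : ℝ => ENNReal.ofReal (ρ ^ β) * A) (𝓝[>] 1) (𝓝 A) := by
    intro β
    have hcont : ContinuousAt (fun ρ : ℝ => ENNReal.ofReal (ρ ^ β)) 1 :=
      ENNReal.continuous_ofReal.continuousAt.comp
        (Real.continuousAt_rpow_const 1 β (Or.inl one_ne_zero))
    have h1 : Tendsto (fun ρ : ℝ => ENNReal.ofReal (ρ ^ β)) (𝓝[>] 1) (𝓝 1) := by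
      simpa using hcont.tendsto.mono_left nhdsWithin_le_nhds
    simpa using ENNReal.Tendsto.mul_const h1 (Or.inl one_ne_zero)
  have hev : ∀ᶠ ρ in 𝓝[>] (1 : ℝ), 1 < ρ := self_mem_nhdsWithin
  exact le_antisymm (ge_of_tendsto (hlim α) (hev.mono fun ρ hρ => (h ρ hρ).2))
    (le_of_tendsto (hlim (-α)) (hev.mono fun ρ hρ => (h ρ hρ).1))

lemma measure_le_of_forall_gt {α : Type*} [MeasurableSpace α] {m : Measure α} {t : ℝ → Set α}
    (ht : Antitone t) {s : Set α} {y : ℝ} (hs : ∀ x ∈ s, ∃ y' > y, x ∈ t y') {c : ℝ≥0∞}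
    (h : ∀ y' > y, m (t y') ≤ c) : m s ≤ c := by
  have hmono : Monotone fun n : ℕ => t (y + 1 / (n + 1)) := fun n n' hnn' => ht (by gcongr)
  calc m s ≤ m (⋃ n : ℕ, t (y + 1 / (n + 1))) := measure_mono fun x hx => by
        obtain ⟨y', hy', hxy'⟩ := hs x hx
        obtain ⟨n, hn⟩ := exists_nat_one_div_lt (sub_pos.2 hy')
        exact mem_iUnion.2 ⟨n, ht (by linarith) hxy'⟩
    _ = ⨆ n : ℕ, m (t (y + 1 / (n + 1))) := hmono.measure_iUnion
    _ ≤ c := iSup_le fun n => h _ (by simp only [gt_iff_lt, lt_add_iff_pos_right]; positivity)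

lemma div_rpow_neg {s a : ℝ} (hs : 0 ≤ s) (ha : 0 ≤ a) (α : ℝ) :
    (s / a) ^ (-α) = s ^ (-α) * a ^ α := by
  rw [Real.div_rpow hs ha, Real.rpow_neg ha, div_inv_eq_mul]

section ParetoProduct

variable {E Ω' : Type*} [MeasurableSpace E] [MeasurableSpace Ω'] {ν : Measure E}
  {μ' : Measure Ω'} [IsFiniteMeasure μ'] {u w : E → ℝ} {Z : Ω' → ℝ} {c α : ℝ}

-- Under `ν`, the pair `(u, w)` is distributed like `(R, Z)` with `R` independent of `Z` and
-- `ν (R > r) = c r^(-α)`.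
def IsParetoProduct (ν : Measure E) (u w : E → ℝ) (c α : ℝ) (μ' : Measure Ω') (Z : Ω' → ℝ) :
    Prop :=
  ∀ r > 0, ∀ y > 0,
    ν {x | r < u x ∧ y < w x} = ENNReal.ofReal (c * r ^ (-α)) * μ' {ω | y < Z ω}

lemma IsParetoProduct.measure_lt_and_mem_Ioc (hN : IsParetoProduct ν u w c α μ' Z)
    (hu : Measurable u) (hw : Measurable w) (hZ : Measurable Z) {r a a' : ℝ} (hr : 0 < r)
    (ha : 0 < a) (haa' : a ≤ a') :
    ν {x | r < u x ∧ w x ∈ Ioc a a'} = ENNReal.ofReal (c * r ^ (-α)) * μ' (Z ⁻¹' Ioc a a') := by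
  have hsub : {x | r < u x ∧ a' < w x} ⊆ {x | r < u x ∧ a < w x} :=
    fun x hx => ⟨hx.1, haa'.trans_lt hx.2⟩
  have hsubZ : {ω | a' < Z ω} ⊆ {ω | a < Z ω} := fun ω hω => haa'.trans_lt hω
  have hdiff : {x | r < u x ∧ w x ∈ Ioc a a'} =
      {x | r < u x ∧ a < w x} \ {x | r < u x ∧ a' < w x} := by
    ext x; simp only [mem_ofPred_eq, mem_Ioc, Set.mem_sdiff, not_and, not_lt]; tauto
  have hdiffZ : Z ⁻¹' Ioc a a' = {ω | a < Z ω} \ {ω | a' < Z ω} := by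
    ext ω; simp
  have hmeas : MeasurableSet {x | r < u x ∧ a' < w x} :=
    (measurableSet_lt measurable_const hu).inter (measurableSet_lt measurable_const hw)
  have hfin : ν {x | r < u x ∧ a' < w x} ≠ ⊤ := by
    rw [hN r hr a' (ha.trans_le haa')]
    exact ENNReal.mul_ne_top ENNReal.ofReal_ne_top (measure_ne_top _ _)
  rw [hdiff, measure_sdiff hsub hmeas.nullMeasurableSet hfin, hN r hr a ha,
    hN r hr a' (ha.trans_le haa'), hdiffZ,
    measure_sdiff hsubZ (measurableSet_lt measurable_const hZ).nullMeasurableSet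
      (measure_ne_top _ _),
    ENNReal.mul_sub fun _ _ => ENNReal.ofReal_ne_top]

lemma IsParetoProduct.measure_piece_le (hN : IsParetoProduct ν u w c α μ' Z)
    (hu : Measurable u) (hw : Measurable w) (hZ : Measurable Z) (hc : 0 ≤ c) (hα : 0 < α)
    {s a ρ : ℝ} (hs : 0 < s) (ha : 0 < a) (hρ : 1 ≤ ρ) :
    ν {x | 0 < u x ∧ s < u x * w x ∧ w x ∈ Ioc a (a * ρ)} ≤
      ENNReal.ofReal (ρ ^ α) * (ENNReal.ofReal (c * s ^ (-α)) *
        ∫⁻ ω in Z ⁻¹' Ioc a (a * ρ), ENNReal.ofReal (Z ω ^ α) ∂μ') := by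
  have haρ : 0 < a * ρ := mul_pos ha (by linarith)
  have hcs : 0 ≤ c * s ^ (-α) := mul_nonneg hc (Real.rpow_nonneg hs.le _)
  calc ν {x | 0 < u x ∧ s < u x * w x ∧ w x ∈ Ioc a (a * ρ)}
      ≤ ν {x | s / (a * ρ) < u x ∧ w x ∈ Ioc a (a * ρ)} := by
        refine measure_mono fun x ⟨hux, hsx, hwx⟩ => ⟨?_, hwx⟩
        rw [div_lt_iff₀ haρ]
        exact hsx.trans_le (mul_le_mul_of_nonneg_left hwx.2 hux.le)
    _ = ENNReal.ofReal (c * (s / (a * ρ)) ^ (-α)) * μ' (Z ⁻¹' Ioc a (a * ρ)) :=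
        hN.measure_lt_and_mem_Ioc hu hw hZ (div_pos hs haρ) ha (le_mul_of_one_le_right ha.le hρ)
    _ = ENNReal.ofReal (ρ ^ α) * (ENNReal.ofReal (c * s ^ (-α)) *
          (ENNReal.ofReal (a ^ α) * μ' (Z ⁻¹' Ioc a (a * ρ)))) := by
        rw [← mul_assoc, ← mul_assoc, ← ENNReal.ofReal_mul (by positivity),
          ← ENNReal.ofReal_mul (mul_nonneg (by positivity) hcs), div_rpow_neg hs.le haρ.le,
          Real.mul_rpow ha.le (by linarith)]
        ring_nf
    _ ≤ _ := by
        gcongr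
        rw [← setLIntegral_const]
        exact setLIntegral_mono ((hZ.pow_const α).ennreal_ofReal) fun ω hω =>
          ENNReal.ofReal_le_ofReal (Real.rpow_le_rpow ha.le hω.1.le hα.le)

lemma IsParetoProduct.le_measure_piece (hN : IsParetoProduct ν u w c α μ' Z)
    (hu : Measurable u) (hw : Measurable w) (hZ : Measurable Z) (hc : 0 ≤ c) (hα : 0 < α)
    {s a ρ : ℝ} (hs : 0 < s) (ha : 0 < a) (hρ : 1 ≤ ρ) :
    ENNReal.ofReal (ρ ^ (-α)) * (ENNReal.ofReal (c * s ^ (-α)) *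
        ∫⁻ ω in Z ⁻¹' Ioc a (a * ρ), ENNReal.ofReal (Z ω ^ α) ∂μ') ≤
      ν {x | 0 < u x ∧ s < u x * w x ∧ w x ∈ Ioc a (a * ρ)} := by
  have hρ0 : 0 < ρ := by linarith
  have hcs : 0 ≤ c * s ^ (-α) := mul_nonneg hc (Real.rpow_nonneg hs.le _)
  calc ENNReal.ofReal (ρ ^ (-α)) * (ENNReal.ofReal (c * s ^ (-α)) *
        ∫⁻ ω in Z ⁻¹' Ioc a (a * ρ), ENNReal.ofReal (Z ω ^ α) ∂μ')
      ≤ ENNReal.ofReal (ρ ^ (-α)) * (ENNReal.ofReal (c * s ^ (-α)) *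
          (ENNReal.ofReal ((a * ρ) ^ α) * μ' (Z ⁻¹' Ioc a (a * ρ)))) := by
        gcongr
        rw [← setLIntegral_const]
        exact setLIntegral_mono measurable_const fun ω hω =>
          ENNReal.ofReal_le_ofReal (Real.rpow_le_rpow (ha.trans hω.1).le hω.2 hα.le)
    _ = ENNReal.ofReal (c * (s / a) ^ (-α)) * μ' (Z ⁻¹' Ioc a (a * ρ)) := by
        rw [← mul_assoc, ← mul_assoc, ← ENNReal.ofReal_mul (by positivity),
          ← ENNReal.ofReal_mul (mul_nonneg (by positivity) hcs), div_rpow_neg hs.le ha.le,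
          Real.mul_rpow ha.le hρ0.le, Real.rpow_neg hρ0.le]
        congr 2
        field_simp
    _ = ν {x | s / a < u x ∧ w x ∈ Ioc a (a * ρ)} :=
        (hN.measure_lt_and_mem_Ioc hu hw hZ (div_pos hs ha) ha
          (le_mul_of_one_le_right ha.le hρ)).symm
    _ ≤ _ := by
        refine measure_mono fun x ⟨hsx, hwx⟩ => ?_
        have hux : 0 < u x := (div_pos hs ha).trans hsx
        refine ⟨hux, ?_, hwx⟩
        rw [div_lt_iff₀ ha] at hsx
        linarith [mul_lt_mul_of_pos_left hwx.1 hux]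

theorem IsParetoProduct.measure_lt_mul (hN : IsParetoProduct ν u w c α μ' Z)
    (hu : Measurable u) (hw : Measurable w) (hZ : Measurable Z) (hZ0 : ∀ ω, 0 ≤ Z ω) (hc : 0 ≤ c)
    (hα : 0 < α) {s : ℝ} (hs : 0 < s) :
    ν {x | 0 < u x ∧ s < u x * w x} =
      ENNReal.ofReal (c * s ^ (-α)) * ∫⁻ ω, ENNReal.ofReal (Z ω ^ α) ∂μ' := by
  refine eq_of_forall_rpow_mul_sandwich (α := α) fun ρ hρ => ?_
  have hρ0 : 0 < ρ := one_pos.trans hρ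
  set J : ℤ → Set ℝ := fun m => Ioc (ρ ^ m) (ρ ^ m * ρ)
  have hJ : Pairwise (Disjoint on J) := by
    simpa [Order.succ_eq_add_one, zpow_add_one₀ hρ0.ne'] using
      (zpow_right_mono₀ hρ.le).pairwise_disjoint_on_Ioc_succ
  have hJcover : ∀ {y : ℝ}, 0 < y → ∃ m, y ∈ J m := fun hy => by
    simpa [J, zpow_add_one₀ hρ0.ne'] using exists_mem_Ioc_zpow hy hρ
  have hV : ν {x | 0 < u x ∧ s < u x * w x} =
      ∑' m, ν {x | 0 < u x ∧ s < u x * w x ∧ w x ∈ J m} := by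
    rw [← measure_iUnion]
    · congr 1
      ext x
      simp only [mem_ofPred_eq, mem_iUnion]
      refine ⟨fun ⟨hux, hsx⟩ => ?_, fun ⟨m, hux, hsx, _⟩ => ⟨hux, hsx⟩⟩
      obtain ⟨m, hm⟩ := hJcover (pos_of_mul_pos_right (hs.trans hsx) hux.le)
      exact ⟨m, hux, hsx, hm⟩
    · exact fun m m' hmm' => Disjoint.mono (fun x hx => hx.2.2) (fun x hx => hx.2.2)
        ((hJ hmm').preimage w)
    · exact fun m => (measurableSet_lt measurable_const hu).inter
        ((measurableSet_lt measurable_const (hu.mul hw)).inter (hw measurableSet_Ioc))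
  have hA : ∫⁻ ω, ENNReal.ofReal (Z ω ^ α) ∂μ' =
      ∑' m, ∫⁻ ω in Z ⁻¹' J m, ENNReal.ofReal (Z ω ^ α) ∂μ' := by
    rw [← lintegral_iUnion (fun m => hZ measurableSet_Ioc) fun m m' hmm' => (hJ hmm').preimage Z,
      setLIntegral_eq_of_support_subset]
    intro ω hω
    have hZω : Z ω ≠ 0 := fun h => hω (by simp [h, Real.zero_rpow hα.ne'])
    obtain ⟨m, hm⟩ := hJcover ((hZ0 ω).lt_of_ne' hZω)
    exact mem_iUnion.2 ⟨m, hm⟩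
  rw [hV, hA]
  simp only [← ENNReal.tsum_mul_left]
  exact ⟨ENNReal.tsum_le_tsum fun m =>
      hN.le_measure_piece hu hw hZ hc hα hs (zpow_pos hρ0 m) hρ.le,
    ENNReal.tsum_le_tsum fun m => hN.measure_piece_le hu hw hZ hc hα hs (zpow_pos hρ0 m) hρ.le⟩

end ParetoProduct

lemma BoundedContinuousFunction.integrable_comp {Ω E : Type*} [MeasurableSpace Ω]
    [TopologicalSpace E] [MeasurableSpace E] [OpensMeasurableSpace E] {μ : Measure Ω}
    [IsFiniteMeasure μ] (f : E →ᵇ ℝ) {Y : Ω → E} (hY : Measurable Y) :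
    Integrable (fun ω => f (Y ω)) μ :=
  (f.integrable (μ.map Y)).comp_measurable hY

section TailMeasure

variable {d : ℕ} {Ω : Type*} [MeasurableSpace Ω] {μ : Measure Ω} {X : Ω → Fin d → ℝ}
  {I : Finset (Fin d)} {b : ℝ → ℝ} {ν : Measure (Fin d → ℝ)}

def IsTailTest (I : Finset (Fin d)) (f : (Fin d → ℝ) → ℝ) : Prop :=
  ∃ ε > (0 : ℝ), ∀ x : Fin d → ℝ, (∀ i ∈ I, x i ≤ ε) → f x = 0

lemma IsTailTest.of_coord {f : (Fin d → ℝ) → ℝ} {i : Fin d} (hi : i ∈ I) {ε : ℝ} (hε : 0 < ε)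
    (h : ∀ x : Fin d → ℝ, x i ≤ ε → f x = 0) : IsTailTest I f :=
  ⟨ε, hε, fun x hx => h x (hx i hi)⟩

lemma IsTailMeasure.integrable (hν : IsTailMeasure μ X I b ν) {f : (Fin d → ℝ) →ᵇ ℝ}
    (hf : IsTailTest I f) : Integrable f ν := by
  obtain ⟨ε, hε, hf0⟩ := hf
  have hsupp : support f ⊆ {x | ∃ i ∈ I, ε ≤ x i} := fun x hx => by
    by_contra hxV
    simp only [mem_ofPred_eq, not_exists, not_and, not_le] at hxV
    exact hx (hf0 x fun i hi => (hxV i hi).le)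
  exact (integrableOn_iff_integrable_of_support_subset hsupp).1 <|
    Measure.integrableOn_of_bounded (hν.1 ε hε).ne f.continuous.aestronglyMeasurable
      (Eventually.of_forall fun x => f.norm_coe_le_norm x)

lemma IsTailMeasure.measure_lt_and_neg_eq_zero (hν : IsTailMeasure μ X I b ν)
    (hXnn : ∀ ω i, 0 ≤ X ω i) {k : Fin d} (hk : k ∈ I) (i : Fin d) {s : ℝ} (hs : 0 < s) :
    ν {x | s < x k ∧ x i < 0} = 0 := by
  set f : (Fin d → ℝ) →ᵇ ℝ := (ramp (s / 2) s).compContinuous (ContinuousMap.eval k) *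
    (ramp 0 1).compContinuous ⟨fun x => -x i, by fun_prop⟩
  have hf : ∀ x, f x = ramp (s / 2) s (x k) * ramp 0 1 (-x i) := fun x => rfl
  have hf0 : 0 ≤ ⇑f := fun x => by
    rw [hf]; exact mul_nonneg (ramp.nonneg _ _ _) (ramp.nonneg _ _ _)
  have htest : IsTailTest I f := .of_coord hk (half_pos hs) fun x hx => by
    rw [hf, ramp.eq_zero (half_le_self hs.le) hx, zero_mul]
  -- `X ≥ 0`, so `f` vanishes along `X / t` and hence has `ν`-integral `0`.
  have hint : ∫ x, f x ∂ν = 0 := by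
    refine tendsto_nhds_unique (hν.2.2 f htest) (tendsto_const_nhds.congr' ?_)
    filter_upwards [eventually_gt_atTop 0] with t ht
    have : ∀ ω, f (fun j => X ω j / t) = 0 := fun ω => by
      rw [hf, ramp.eq_zero zero_le_one (by simpa using div_nonneg (hXnn ω i) ht.le), mul_zero]
    simp [this]
  have hae : f =ᵐ[ν] 0 := (integral_eq_zero_iff_of_nonneg hf0 (hν.integrable htest)).1 hint
  refine measure_mono_null (fun x ⟨hxk, hxi⟩ => ?_) (ae_iff.1 hae)
  rw [mem_ofPred_eq, hf, ramp.eq_one (half_lt_self hs) hxk.le, one_mul]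
  exact (ramp.pos one_pos (neg_pos.2 hxi)).ne'

lemma IsTailMeasure.measure_lt_coord_split (hν : IsTailMeasure μ X I b ν)
    (hXnn : ∀ ω i, 0 ≤ X ω i) {k : Fin d} (hk : k ∈ I) (i : Fin d) {s : ℝ} (hs : 0 < s) :
    ν {x | s < x k ∧ x i = 0} + ν {x | 0 < x i ∧ s < x i * (x k / x i)} = ν {x | s < x k} := by
  have hpos : {x : Fin d → ℝ | 0 < x i ∧ s < x i * (x k / x i)} =
      ({x | s < x k} \ {x | x i = 0}) \ {x | s < x k ∧ x i < 0} := by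
    ext x
    simp only [Set.mem_sdiff, mem_ofPred_eq, not_and, not_lt]
    constructor
    · rintro ⟨hxi, hx⟩
      rw [mul_div_cancel₀ _ hxi.ne'] at hx
      exact ⟨⟨hx, hxi.ne'⟩, fun _ => hxi.le⟩
    · rintro ⟨⟨hx, hxi⟩, hnn⟩
      have hxi' : 0 < x i := (hnn hx).lt_of_ne' hxi
      exact ⟨hxi', by rwa [mul_div_cancel₀ _ hxi'.ne']⟩
  rw [hpos, measure_sdiff_null (hν.measure_lt_and_neg_eq_zero hXnn hk i hs)]
  exact measure_inter_add_sdiff _ (measurable_pi_apply i (measurableSet_singleton 0))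

-- `max (x i) (r' / 2)` agrees with `x i` wherever the ramp is nonzero, and keeps the quotient
-- continuous.
noncomputable def coneTest (i : Fin d) {r' : ℝ} (hr' : 0 < r') (r : ℝ)
    (ψ : (Fin d → ℝ) →ᵇ ℝ) : (Fin d → ℝ) →ᵇ ℝ :=
  (ramp r' r).compContinuous (ContinuousMap.eval i) *
    ψ.compContinuous ⟨fun x j => x j / max (x i) (r' / 2), continuous_pi fun j =>
      (continuous_apply j).div ((continuous_apply i).max continuous_const)
        fun _ => ((half_pos hr').trans_le (le_max_right _ _)).ne'⟩

lemma coneTest_apply {i : Fin d} {r' r : ℝ} (hr' : 0 < r') (hr : r' ≤ r)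
    (ψ : (Fin d → ℝ) →ᵇ ℝ) (x : Fin d → ℝ) :
    coneTest i hr' r ψ x = ramp r' r (x i) * ψ (fun j => x j / x i) := by
  change ramp r' r (x i) * ψ (fun j => x j / max (x i) (r' / 2)) = _
  rcases le_or_gt (x i) r' with hx | hx
  · rw [ramp.eq_zero hr hx, zero_mul, zero_mul]
  · rw [max_eq_left (by linarith)]

lemma isTailTest_coneTest {i : Fin d} (hi : i ∈ I) {r' r : ℝ} (hr' : 0 < r') (hr : r' ≤ r)
    (ψ : (Fin d → ℝ) →ᵇ ℝ) : IsTailTest I (coneTest i hr' r ψ) :=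
  .of_coord hi hr' fun x hx => by rw [coneTest_apply hr' hr, ramp.eq_zero hr hx, zero_mul]

variable {Ω' : Type*} [MeasurableSpace Ω'] {μ' : Measure Ω'} {Θ : Ω' → Fin d → ℝ} {α c : ℝ}

def HasTailSpectrum (μ : Measure Ω) (X : Ω → Fin d → ℝ) (b : ℝ → ℝ) (i : Fin d) (c : ℝ)
    (μ' : Measure Ω') (Θ : Ω' → Fin d → ℝ) : Prop :=
  Tendsto (fun t => b t * (μ {ω | t < X ω i}).toReal) atTop (𝓝 c) ∧
    ∀ ψ : (Fin d → ℝ) →ᵇ ℝ,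
      Tendsto (fun t => ∫ ω, ψ (fun j => X ω j / X ω i) ∂(μ[|{ω | t < X ω i}])) atTop
        (𝓝 (∫ ω', ψ (Θ ω') ∂μ'))

variable [IsFiniteMeasure μ]

lemma HasTailSpectrum.tendsto_mul_setIntegral {i : Fin d}
    (hspec : HasTailSpectrum μ X b i c μ' Θ) (hb : RegularlyVarying b α) (ψ : (Fin d → ℝ) →ᵇ ℝ)
    {v : ℝ} (hv : 0 < v) :
    Tendsto (fun t => b t * ∫ ω in {ω | v * t < X ω i}, ψ (fun j => X ω j / X ω i) ∂μ) atTop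
      (𝓝 (c * (∫ ω', ψ (Θ ω') ∂μ') * v ^ (-α))) :=
  hb.tendsto_mul_comp_const_mul
    (g := fun t => ∫ ω in {ω | t < X ω i}, ψ (fun j => X ω j / X ω i) ∂μ)
    ((hspec.1.mul (hspec.2 ψ)).congr fun t => by
      rw [setIntegral_eq_toReal_mul_integral_cond, mul_assoc]) hv

lemma IsTailMeasure.integral_coneTest_mem_Icc (hν : IsTailMeasure μ X I b ν)
    (hb : RegularlyVarying b α) (hX : Measurable X) {i : Fin d} (hi : i ∈ I)
    (hspec : HasTailSpectrum μ X b i c μ' Θ) {ψ : (Fin d → ℝ) →ᵇ ℝ} (hψ : 0 ≤ ψ)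
    {r' r : ℝ} (hr' : 0 < r') (hr : r' < r) :
    ∫ x, coneTest i hr' r ψ x ∂ν ∈
      Icc (c * (∫ ω', ψ (Θ ω') ∂μ') * r ^ (-α)) (c * (∫ ω', ψ (Θ ω') ∂μ') * r' ^ (-α)) := by
  set F := coneTest i hr' r ψ
  set Y : Ω → Fin d → ℝ := fun ω j => X ω j / X ω i
  have hXj : ∀ j, Measurable fun ω => X ω j := fun j => (measurable_pi_apply j).comp hX
  have hY : Measurable Y := measurable_pi_lambda _ fun j => (hXj j).div (hXj i)
  have hA : ∀ v t : ℝ, MeasurableSet {ω | v * t < X ω i} := fun v t =>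
    measurableSet_lt measurable_const (hXj i)
  have hFX : ∀ t > 0, ∀ ω, F (fun j => X ω j / t) = ramp r' r (X ω i / t) * ψ (Y ω) :=
    fun t ht ω => by
      rw [coneTest_apply hr' hr.le]
      simp only [div_div_div_cancel_right₀ ht.ne', Y]
  have hF0 : ∀ x, 0 ≤ F x := fun x => by
    rw [coneTest_apply hr' hr.le]; exact mul_nonneg (ramp.nonneg _ _ _) (hψ _)
  have hFint : ∀ t : ℝ, Integrable (fun ω => F (fun j => X ω j / t)) μ := fun t =>
    F.integrable_comp (measurable_pi_lambda _ fun j => (hXj j).div_const t)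
  have hlow : ∀ t > 0, ∫ ω in {ω | r * t < X ω i}, ψ (Y ω) ∂μ ≤
      ∫ ω, F (fun j => X ω j / t) ∂μ := fun t ht => by
    calc ∫ ω in {ω | r * t < X ω i}, ψ (Y ω) ∂μ
        = ∫ ω in {ω | r * t < X ω i}, F (fun j => X ω j / t) ∂μ :=
          setIntegral_congr_fun (hA r t) fun ω hω => by
            rw [hFX t ht, ramp.eq_one hr ((le_div_iff₀ ht).2 hω.le), one_mul]
      _ ≤ ∫ ω, F (fun j => X ω j / t) ∂μ :=
          setIntegral_le_integral (hFint t) (Eventually.of_forall fun ω => hF0 _)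
  have hup : ∀ t > 0, ∫ ω, F (fun j => X ω j / t) ∂μ ≤
      ∫ ω in {ω | r' * t < X ω i}, ψ (Y ω) ∂μ := fun t ht => by
    calc ∫ ω, F (fun j => X ω j / t) ∂μ
        = ∫ ω in {ω | r' * t < X ω i}, F (fun j => X ω j / t) ∂μ :=
          (setIntegral_eq_integral_of_forall_compl_eq_zero fun ω hω => by
            rw [hFX t ht, ramp.eq_zero hr.le ((div_le_iff₀ ht).2 (not_lt.1 hω)), zero_mul]).symm
      _ ≤ ∫ ω in {ω | r' * t < X ω i}, ψ (Y ω) ∂μ :=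
          setIntegral_mono_on (hFint t).integrableOn (ψ.integrable_comp hY).integrableOn (hA r' t)
            fun ω _ => by
              rw [hFX t ht]; exact mul_le_of_le_one_left (hψ _) (ramp.le_one _ _ _)
  have hev : ∀ᶠ t in atTop, 0 < t ∧ 0 < b t := (eventually_gt_atTop 0).and hb.1
  have hlim := hν.2.2 F (isTailTest_coneTest hi hr' hr.le ψ)
  exact ⟨le_of_tendsto_of_tendsto (hspec.tendsto_mul_setIntegral hb ψ (hr'.trans hr)) hlim
      (hev.mono fun t ht => mul_le_mul_of_nonneg_left (hlow t ht.1) ht.2.le),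
    le_of_tendsto_of_tendsto hlim (hspec.tendsto_mul_setIntegral hb ψ hr')
      (hev.mono fun t ht => mul_le_mul_of_nonneg_left (hup t ht.1) ht.2.le)⟩

lemma measurableSet_sector (i k : Fin d) (r y : ℝ) :
    MeasurableSet {x : Fin d → ℝ | r < x i ∧ y < x k / x i} :=
  (measurableSet_lt measurable_const (measurable_pi_apply i)).inter
    (measurableSet_lt measurable_const ((measurable_pi_apply k).div (measurable_pi_apply i)))

variable {i : Fin d}

lemma IsTailMeasure.measure_sector_le [IsFiniteMeasure μ'] (hν : IsTailMeasure μ X I b ν)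
    (hb : RegularlyVarying b α) (hX : Measurable X) (hi : i ∈ I) (hc : 0 ≤ c)
    (hspec : HasTailSpectrum μ X b i c μ' Θ) (hΘ : Measurable Θ) (k : Fin d) {r' r y' y : ℝ}
    (hr' : 0 < r') (hr : r' < r) (hy : y' < y) :
    ν {x | r < x i ∧ y < x k / x i} ≤ ENNReal.ofReal (c * r' ^ (-α)) * μ' {ω | y' < Θ ω k} := by
  set ψ : (Fin d → ℝ) →ᵇ ℝ := (ramp y' y).compContinuous (ContinuousMap.eval k)
  have hψ : 0 ≤ ψ := fun _ => ramp.nonneg _ _ _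
  have hF := hν.integral_coneTest_mem_Icc hb hX hi hspec hψ hr' hr
  calc ν {x | r < x i ∧ y < x k / x i}
      ≤ ENNReal.ofReal (∫ x, coneTest i hr' r ψ x ∂ν) := by
        refine measure_le_ofReal_integral (measurableSet_sector i k r y)
          (hν.integrable (isTailTest_coneTest hi hr' hr.le ψ)) (indicator_le' (fun x hx => ?_)
            fun x _ => ?_) <;> rw [coneTest_apply hr' hr.le]
        · rw [ramp.eq_one hr hx.1.le, one_mul]
          exact (ramp.eq_one hy hx.2.le).ge
        · exact mul_nonneg (ramp.nonneg _ _ _) (hψ _)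
    _ ≤ ENNReal.ofReal (c * r' ^ (-α)) * ENNReal.ofReal (∫ ω, ψ (Θ ω) ∂μ') := by
        rw [← ENNReal.ofReal_mul (mul_nonneg hc (Real.rpow_nonneg hr'.le _)), mul_right_comm]
        exact ENNReal.ofReal_le_ofReal hF.2
    _ ≤ ENNReal.ofReal (c * r' ^ (-α)) * μ' {ω | y' < Θ ω k} := by
        gcongr
        refine ofReal_integral_le_measure (measurableSet_lt measurable_const
          ((measurable_pi_apply k).comp hΘ)) (ψ.integrable_comp hΘ)
          (le_indicator (fun ω _ => ramp.le_one _ _ _) fun ω hω => ?_)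
        exact (ramp.eq_zero hy.le (not_lt.1 hω)).le

lemma IsTailMeasure.le_measure_sector [IsFiniteMeasure μ'] (hν : IsTailMeasure μ X I b ν)
    (hb : RegularlyVarying b α) (hX : Measurable X) (hi : i ∈ I) (hc : 0 ≤ c)
    (hspec : HasTailSpectrum μ X b i c μ' Θ) (hΘ : Measurable Θ) (k : Fin d) {r r₂ y y₂ : ℝ}
    (hr : 0 < r) (hr₂ : r < r₂) (hy : y < y₂) :
    ENNReal.ofReal (c * r₂ ^ (-α)) * μ' {ω | y₂ ≤ Θ ω k} ≤ ν {x | r < x i ∧ y < x k / x i} := by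
  set ψ : (Fin d → ℝ) →ᵇ ℝ := (ramp y y₂).compContinuous (ContinuousMap.eval k)
  have hψ : 0 ≤ ψ := fun _ => ramp.nonneg _ _ _
  have hF := hν.integral_coneTest_mem_Icc hb hX hi hspec hψ hr hr₂
  calc ENNReal.ofReal (c * r₂ ^ (-α)) * μ' {ω | y₂ ≤ Θ ω k}
      ≤ ENNReal.ofReal (c * r₂ ^ (-α)) * ENNReal.ofReal (∫ ω, ψ (Θ ω) ∂μ') := by
        gcongr
        exact measure_le_ofReal_integral (measurableSet_le measurable_const
          ((measurable_pi_apply k).comp hΘ)) (ψ.integrable_comp hΘ)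
          (indicator_le' (fun ω hω => (ramp.eq_one hy hω).ge) fun ω _ => ramp.nonneg _ _ _)
    _ ≤ ENNReal.ofReal (∫ x, coneTest i hr r₂ ψ x ∂ν) := by
        rw [← ENNReal.ofReal_mul (mul_nonneg hc (Real.rpow_nonneg (hr.trans hr₂).le _)),
          mul_right_comm]
        exact ENNReal.ofReal_le_ofReal hF.1
    _ ≤ ν {x | r < x i ∧ y < x k / x i} := by
        refine ofReal_integral_le_measure (measurableSet_sector i k r y)
          (hν.integrable (isTailTest_coneTest hi hr hr₂.le ψ)) (le_indicator (fun x _ => ?_)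
            fun x hx => ?_) <;> rw [coneTest_apply hr hr₂.le]
        · exact mul_le_one₀ (ramp.le_one _ _ _) (hψ _) (ramp.le_one _ _ _)
        · rcases not_and_or.1 hx with hxi | hxk
          · rw [ramp.eq_zero hr₂.le (not_lt.1 hxi), zero_mul]
          · exact (mul_eq_zero_of_right _ (ramp.eq_zero hy.le (not_lt.1 hxk))).le

lemma IsTailMeasure.measure_sector [IsFiniteMeasure μ'] (hν : IsTailMeasure μ X I b ν)
    (hb : RegularlyVarying b α) (hX : Measurable X) (hi : i ∈ I) (hc : 0 ≤ c)
    (hspec : HasTailSpectrum μ X b i c μ' Θ) (hΘ : Measurable Θ) (k : Fin d) {r : ℝ} (hr : 0 < r)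
    (y : ℝ) :
    ν {x | r < x i ∧ y < x k / x i} = ENNReal.ofReal (c * r ^ (-α)) * μ' {ω | y < Θ ω k} := by
  have hcont : ∀ M : ℝ≥0∞, M ≠ ⊤ → ContinuousAt (fun ρ => ENNReal.ofReal (c * ρ ^ (-α)) * M) r :=
    fun M hM => (ENNReal.continuous_mul_const hM).continuousAt.comp
      (ENNReal.continuous_ofReal.continuousAt.comp
        (continuousAt_const.mul (Real.continuousAt_rpow_const r (-α) (Or.inl hr.ne'))))
  refine le_antisymm ?_ ?_
  · refine measure_le_of_forall_gt (y := y) (t := fun y' => {x | r < x i ∧ y' < x k / x i})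
      (fun y₁ y₂ h x hx => ⟨hx.1, h.trans_lt hx.2⟩) (fun x hx => ?_) fun y' hy' => ?_
    · obtain ⟨y', hy', hy'x⟩ := exists_between hx.2
      exact ⟨y', hy', hx.1, hy'x⟩
    · have hev : ∀ᶠ r' in 𝓝[<] r, ν {x | r < x i ∧ y' < x k / x i} ≤
          ENNReal.ofReal (c * r' ^ (-α)) * μ' {ω | y < Θ ω k} :=
        mem_of_superset (Ioo_mem_nhdsLT hr) fun r' hr' =>
          hν.measure_sector_le hb hX hi hc hspec hΘ k hr'.1 hr'.2 hy'
      exact ge_of_tendsto ((hcont _ (measure_ne_top _ _)).tendsto.mono_left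
        (nhdsWithin_le_nhds (s := Iio r))) hev
  · have key : (ENNReal.ofReal (c * r ^ (-α)) • μ') {ω | y < Θ ω k} ≤
        ν {x | r < x i ∧ y < x k / x i} := by
      refine measure_le_of_forall_gt (y := y) (t := fun y₂ => {ω | y₂ ≤ Θ ω k})
        (fun y₁ y₂ h ω hω => h.trans hω) (fun ω hω => ⟨Θ ω k, hω, le_refl (Θ ω k)⟩)
        fun y₂ hy₂ => ?_
      exact le_of_tendsto ((hcont _ (measure_ne_top _ _)).tendsto.mono_left
        (nhdsWithin_le_nhds (s := Ioi r))) (mem_of_superset self_mem_nhdsWithin fun r₂ hr₂ =>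
          hν.le_measure_sector hb hX hi hc hspec hΘ k hr hr₂ hy₂)
    simpa using key

lemma IsTailMeasure.measure_lt_coord [IsProbabilityMeasure μ'] (hν : IsTailMeasure μ X I b ν)
    (hb : RegularlyVarying b α) (hX : Measurable X) {j : Fin d} (hj : j ∈ I) (hc : 0 ≤ c)
    (hspec : HasTailSpectrum μ X b j c μ' Θ) (hΘ : Measurable Θ) (hΘnn : ∀ ω, 0 ≤ Θ ω j)
    {s : ℝ} (hs : 0 < s) :
    ν {x | s < x j} = ENNReal.ofReal (c * s ^ (-α)) := by
  have h := hν.measure_sector hb hX hj hc hspec hΘ j hs (-1)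
  -- Level `-1` lies below `x j / x j = 1` on `{s < x j}` and below `Θ ω j ≥ 0`.
  have hS : {x : Fin d → ℝ | s < x j ∧ -1 < x j / x j} = {x | s < x j} := by
    ext x
    exact and_iff_left_of_imp fun hx => by rw [div_self (hs.trans hx).ne']; norm_num
  have hΘS : {ω | -1 < Θ ω j} = univ :=
    eq_univ_of_forall fun ω => show -1 < Θ ω j by linarith [hΘnn ω]
  rwa [hS, hΘS, measure_univ, mul_one] at h

end TailMeasure

lemma eq_rpow_neg_mul_of_add_eq {h M : ℝ≥0∞} {a a' s α : ℝ} (ha : 0 ≤ a) (ha' : 0 ≤ a')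
    (heq : h + ENNReal.ofReal (a * s ^ (-α)) * M = ENNReal.ofReal (a' * s ^ (-α))) :
    h = ENNReal.ofReal (s ^ (-α)) * (ENNReal.ofReal a' - ENNReal.ofReal a * M) := by
  have hfin : ENNReal.ofReal (a * s ^ (-α)) * M ≠ ⊤ :=
    ne_top_of_le_ne_top ENNReal.ofReal_ne_top (heq ▸ le_add_self)
  rw [ENNReal.mul_sub fun _ _ => ENNReal.ofReal_ne_top, ENNReal.eq_sub_of_add_eq hfin heq,
    ENNReal.ofReal_mul ha, ENNReal.ofReal_mul ha']
  ring_nf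

lemma eq_top_of_forall_rpow_neg_mul_le {V D : ℝ≥0∞} {α : ℝ} (hα : 0 < α) (hD : D ≠ 0)
    (h : ∀ s > 0, ENNReal.ofReal (s ^ (-α)) * D ≤ V) : V = ⊤ := by
  have hlim : Tendsto (fun s : ℝ => ENNReal.ofReal (s ^ (-α)) * D) (𝓝[>] 0) (𝓝 ⊤) := by
    simpa [ENNReal.top_mul hD] using ENNReal.Tendsto.mul_const (b := D)
      (ENNReal.tendsto_ofReal_atTop.comp (tendsto_rpow_neg_nhdsGT_zero (neg_lt_zero.2 hα)))
      (Or.inl ENNReal.top_ne_zero)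
  exact top_unique (le_of_tendsto hlim (eventually_nhdsWithin_of_forall h))

lemma measure_hyperplane_dichotomy {d : ℕ} {ν : Measure (Fin d → ℝ)} {I : Finset (Fin d)}
    {i : Fin d} (hi : i ∈ I) {α : ℝ} (hα : 0 < α) {c : Fin d → ℝ} (hc : ∀ k ∈ I, 0 < c k)
    {M : Fin d → ℝ≥0∞}
    (hsplit : ∀ k ∈ I, ∀ s > 0, ν {x | s < x k ∧ x i = 0} +
      ENNReal.ofReal (c i * s ^ (-α)) * M k = ENNReal.ofReal (c k * s ^ (-α))) :
    ((∀ k ∈ I, M k = ENNReal.ofReal (c k / c i)) → ν {x | (∃ k ∈ I, 0 < x k) ∧ x i = 0} = 0) ∧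
      ((¬ ∀ k ∈ I, M k = ENNReal.ofReal (c k / c i)) →
        ν {x | (∃ k ∈ I, 0 < x k) ∧ x i = 0} = ⊤) := by
  have hci := hc i hi
  have hH : ∀ k ∈ I, ∀ s > 0, ν {x | s < x k ∧ x i = 0} =
      ENNReal.ofReal (s ^ (-α)) * (ENNReal.ofReal (c k) - ENNReal.ofReal (c i) * M k) :=
    fun k hk s _ => eq_rpow_neg_mul_of_add_eq hci.le (hc k hk).le (hsplit k hk s ‹_›)
  constructor
  · intro hM
    have hsub : {x : Fin d → ℝ | (∃ k ∈ I, 0 < x k) ∧ x i = 0} ⊆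
        ⋃ k ∈ I, {x | 0 < x k ∧ x i = 0} :=
      fun x ⟨⟨k, hk, hxk⟩, hxi⟩ => mem_biUnion hk ⟨hxk, hxi⟩
    refine measure_mono_null hsub
      ((measure_biUnion_null_iff I.countable_toSet).2 fun k hk => nonpos_iff_eq_zero.1 ?_)
    refine measure_le_of_forall_gt (y := 0) (t := fun s => {x : Fin d → ℝ | s < x k ∧ x i = 0})
      (fun s₁ s₂ h x hx => ⟨h.trans_lt hx.1, hx.2⟩) (fun x hx => ?_) fun s hs => ?_
    · obtain ⟨s, hs, hsx⟩ := exists_between hx.1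
      exact ⟨s, hs, hsx, hx.2⟩
    · rw [hH k hk s hs, hM k hk, ← ENNReal.ofReal_mul hci.le, mul_div_cancel₀ _ hci.ne',
        tsub_self, mul_zero]
  · intro hM
    push Not at hM
    obtain ⟨k, hk, hMk⟩ := hM
    have hle : ENNReal.ofReal (c i) * M k ≤ ENNReal.ofReal (c k) := by
      simpa using (le_add_self).trans_eq (hsplit k hk 1 one_pos)
    have hne : ENNReal.ofReal (c i) * M k ≠ ENNReal.ofReal (c k) := fun h => hMk <| by
      rw [ENNReal.ofReal_div_of_pos hci, ENNReal.eq_div_iff (by simpa using hci)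
        ENNReal.ofReal_ne_top, h]
    refine eq_top_of_forall_rpow_neg_mul_le hα (tsub_pos_of_lt (hle.lt_of_ne hne)).ne'
      fun s hs => ?_
    rw [← hH k hk s hs]
    exact measure_mono fun x hx => ⟨⟨k, hk, hs.trans hx.1⟩, hx.2⟩

theorem tail_measure_hyperplane_general
    {d : ℕ} {Ω : Type*} [MeasurableSpace Ω] (μ : Measure Ω) [IsProbabilityMeasure μ]
    (X : Ω → Fin d → ℝ) (hXmeas : Measurable X) (hXnn : ∀ ω i, 0 ≤ X ω i)
    (I : Finset (Fin d))
    (b : ℝ → ℝ) (α : ℝ) (hα : 0 < α) (hb : RegularlyVarying b α)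
    (c : Fin d → ℝ) (hc : ∀ i ∈ I, 0 < c i)
    (htail : ∀ i ∈ I,
      Tendsto (fun t => b t * (μ {ω | t < X ω i}).toReal) atTop (𝓝 (c i)))
    {Ω' : Type*} [MeasurableSpace Ω'] (μ' : Measure Ω') [IsProbabilityMeasure μ']
    (Θ : Fin d → Ω' → Fin d → ℝ) (hΘmeas : ∀ i, Measurable (Θ i))
    (hΘnn : ∀ i ω' j, 0 ≤ Θ i ω' j)
    (hconv : ∀ i ∈ I, ∀ f : BoundedContinuousFunction (Fin d → ℝ) ℝ,
      Tendsto (fun t => ∫ ω, f (fun j => X ω j / X ω i) ∂(μ[|{ω | t < X ω i}])) atTop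
        (𝓝 (∫ ω', f (Θ i ω') ∂μ')))
    (ν : Measure (Fin d → ℝ)) (hν : IsTailMeasure μ X I b ν) :
    ∀ i ∈ I,
      ((∀ j ∈ I, ∫⁻ ω', ENNReal.ofReal ((Θ i ω' j) ^ α) ∂μ'
          = ENNReal.ofReal (c j / c i)) →
        ν {x | (∃ k ∈ I, 0 < x k) ∧ x i = 0} = 0) ∧
      ((¬ ∀ j ∈ I, ∫⁻ ω', ENNReal.ofReal ((Θ i ω' j) ^ α) ∂μ'
          = ENNReal.ofReal (c j / c i)) →
        ν {x | (∃ k ∈ I, 0 < x k) ∧ x i = 0} = ⊤) := by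
  intro i hi
  have hspec : ∀ j ∈ I, HasTailSpectrum μ X b j (c j) μ' (Θ j) :=
    fun j hj => ⟨htail j hj, hconv j hj⟩
  refine measure_hyperplane_dichotomy hi hα hc fun k hk s hs => ?_
  have hprod : IsParetoProduct ν (fun x => x i) (fun x => x k / x i) (c i) α μ'
      (fun ω' => Θ i ω' k) := fun r hr y _ =>
    hν.measure_sector hb hXmeas hi (hc i hi).le (hspec i hi) (hΘmeas i) k hr y
  rw [← hprod.measure_lt_mul (measurable_pi_apply i)
      ((measurable_pi_apply k).div (measurable_pi_apply i))
      ((measurable_pi_apply k).comp (hΘmeas i)) (fun ω' => hΘnn i ω' k) (hc i hi).le hα hs,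
    ← hν.measure_lt_coord hb hXmeas hk (hc k hk).le (hspec k hk) (hΘmeas k) (hΘnn k · k) hs]
  exact hν.measure_lt_coord_split hXnn hk i hs

/-- Corollary `cor:justk`, equation `eq:nuxi0`: the tail measure of the
hyperplane `{x ∈ S_{0,I} : x_i = 0}` is `0` if `E[Θ_{i,j}^α] = c_j/c_i` for all `j ∈ I`,
and `∞` otherwise. -/
theorem tail_measure_hyperplane
    {d : ℕ} {Ω : Type*} [MeasurableSpace Ω] (μ : Measure Ω) [IsProbabilityMeasure μ]
    (X : Ω → Fin d → ℝ) (hXmeas : Measurable X) (hXnn : ∀ ω i, 0 ≤ X ω i)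
    (I : Finset (Fin d)) (hI : I.Nonempty)
    (b : ℝ → ℝ) (α : ℝ) (hα : 0 < α) (hb : RegularlyVarying b α)
    (c : Fin d → ℝ) (hc : ∀ i ∈ I, 0 < c i)
    (htail : ∀ i ∈ I,
      Tendsto (fun t => b t * (μ {ω | t < X ω i}).toReal) atTop (𝓝 (c i)))
    {Ω' : Type*} [MeasurableSpace Ω'] (μ' : Measure Ω') [IsProbabilityMeasure μ']
    (Θ : Fin d → Ω' → Fin d → ℝ) (hΘmeas : ∀ i, Measurable (Θ i))
    (hΘnn : ∀ i ω' j, 0 ≤ Θ i ω' j)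
    (hΘii : ∀ i ∈ I, ∀ᵐ ω' ∂μ', Θ i ω' i = 1)
    (hconv : ∀ i ∈ I, ∀ f : BoundedContinuousFunction (Fin d → ℝ) ℝ,
      Tendsto (fun t => ∫ ω, f (fun j => X ω j / X ω i) ∂(μ[|{ω | t < X ω i}])) atTop
        (𝓝 (∫ ω', f (Θ i ω') ∂μ')))
    (ν : Measure (Fin d → ℝ)) (hν : IsTailMeasure μ X I b ν) :
    ∀ i ∈ I,
      ((∀ j ∈ I, ∫⁻ ω', ENNReal.ofReal ((Θ i ω' j) ^ α) ∂μ'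
          = ENNReal.ofReal (c j / c i)) →
        ν {x | (∃ k ∈ I, 0 < x k) ∧ x i = 0} = 0) ∧
      ((¬ ∀ j ∈ I, ∫⁻ ω', ENNReal.ofReal ((Θ i ω' j) ^ α) ∂μ'
          = ENNReal.ofReal (c j / c i)) →
        ν {x | (∃ k ∈ I, 0 < x k) ∧ x i = 0} = ⊤) :=
  tail_measure_hyperplane_general μ X hXmeas hXnn I b α hα hb c hc htail μ' Θ hΘmeas hΘnn hconv ν hν
end

section
/- Let Z_1,…,Z_s be independent, identically distributed nonnegative random variables whose common tail function F̄(t)=P(Z_1>t) is regularly varying at infinity with index −α<0, and let a_{i,r}∈[0,∞) for i∈{1,…,d}, r∈{1,…,s} satisfy max_r a_{i,r}>0 for every i. Define the max-linear random vector X=(X_1,…,X_d) by X_i = max_{r=1,…,s} a_{i,r} Z_r. Then: (1) for every i, lim_{t→∞} P(X_i>t)/F̄(t) = c_i := Σ_{r=1}^s a_{i,r}^α; and (2) for every i, the conditional law of X/X_i given {X_i>t} converges weakly as t→∞ to the discrete law Θ_i = (1/c_i) Σ_{r=1}^s a_{i,r}^α δ_{θ^{(r)}}, where δ denotes a unit point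 mass and θ^{(r)} is the vector with coordinates θ^{(r)}_j = a_{j,r}/a_{i,r} for j=1,…,d (the sum running over r with a_{i,r}>0). -/
open MeasureTheory ProbabilityTheory Filter Topology
open scoped ENNReal

/-!
Single big jump: `X_i` exceeds a high level `t` essentially only when one factor `Z_r` is of
order `t` while all the others stay below `√t`. Indeed, regular variation gives
`P(a_{i,r} Z_r > t) ~ a_{i,r}^α F̄(t)`, and by independence
`P(a_{i,r} Z_r > t, Z_{r'} > √t) ~ a_{i,r}^α F̄(t) F̄(√t) = o(F̄(t))`. On the event that `Z_r`
alone is large, `X` equals `Z_r (a_{j,r})_j` up to an additive error `O(√t)` while `X_i > t`, so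
`X / X_i` lies within `O(t^{-1/2})` of `θ^{(r)}`. Hence for bounded continuous `g`,
`∫_{X_i > t} g(X / X_i) dP ~ F̄(t) Σ_r a_{i,r}^α g(θ^{(r)})`; `g = 1` gives the tail limit, and
the quotient of the two gives the conditional limit law.
-/

lemma RegularlyVarying.tendsto_inv_mul_div {F : ℝ → ℝ} {α b : ℝ}
    (hF : RegularlyVarying F (-α)) (hb : 0 < b) :
    Tendsto (fun t => F (b⁻¹ * t) / F t) atTop (𝓝 (b ^ α)) := by
  have := hF.2 b⁻¹ (inv_pos.2 hb)
  rwa [Real.inv_rpow hb.le, Real.rpow_neg hb.le, inv_inv] at this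

section SetIntegral

variable {Ω ι : Type*} [MeasurableSpace Ω] {μ : Measure Ω} [IsFiniteMeasure μ] {l : Filter ι}
  {G : Ω → ℝ} {F : ι → ℝ}

theorem tendsto_setIntegral_div_of_forall_dist_le (hG : Integrable G μ) {B : ι → Set Ω}
    {m y : ℝ} (hB : Tendsto (fun t => μ.real (B t) / F t) l (𝓝 m))
    (hGB : ∀ ε > 0, ∀ᶠ t in l, ∀ ω ∈ B t, dist (G ω) y ≤ ε) :
    Tendsto (fun t => (∫ ω in B t, G ω ∂μ) / F t) l (𝓝 (m * y)) := by
  have hsplit : ∀ t, (∫ ω in B t, G ω ∂μ) / F t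
      = (∫ ω in B t, (G ω - y) ∂μ) / F t + μ.real (B t) / F t * y := by
    intro t
    rw [integral_sub hG.integrableOn (integrable_const y).integrableOn, setIntegral_const,
      smul_eq_mul]
    ring
  have herr : (fun t => (∫ ω in B t, (G ω - y) ∂μ) / F t) =o[l] (fun _ => (1 : ℝ)) := by
    refine Asymptotics.IsLittleO.trans_isBigO ?_ (hB.isBigO_one ℝ)
    refine Asymptotics.IsLittleO.of_bound fun ε hε => ?_
    filter_upwards [hGB ε hε] with t ht
    rw [norm_div, norm_div, Real.norm_of_nonneg measureReal_nonneg, ← mul_div_assoc]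
    gcongr
    exact norm_setIntegral_le_of_norm_le_const (measure_lt_top _ _) ht
  simpa [hsplit] using ((Asymptotics.isLittleO_one_iff ℝ).1 herr).add (hB.mul_const y)

theorem tendsto_setIntegral_div_of_pairwise_disjoint {κ : Type*} [Fintype κ] {C : ℝ}
    (hG : Integrable G μ) (hGC : ∀ ω, ‖G ω‖ ≤ C) {A : ι → Set Ω} {B : κ → ι → Set Ω}
    (hBmeas : ∀ k t, MeasurableSet (B k t)) (hBA : ∀ k t, B k t ⊆ A t)
    (hdisj : ∀ᶠ t in l, Pairwise (Function.onFun Disjoint fun k => B k t))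
    (hrest : Tendsto (fun t => μ.real (A t \ ⋃ k, B k t) / F t) l (𝓝 0))
    {L : κ → ℝ} (hB : ∀ k, Tendsto (fun t => (∫ ω in B k t, G ω ∂μ) / F t) l (𝓝 (L k))) :
    Tendsto (fun t => (∫ ω in A t, G ω ∂μ) / F t) l (𝓝 (∑ k, L k)) := by
  have hD : Tendsto (fun t => (∫ ω in A t \ ⋃ k, B k t, G ω ∂μ) / F t) l (𝓝 0) := by
    have hbound : Tendsto (fun t => C * ‖μ.real (A t \ ⋃ k, B k t) / F t‖) l (𝓝 0) := by
      simpa using hrest.norm.const_mul C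
    refine squeeze_zero_norm (fun t => ?_) hbound
    calc ‖(∫ ω in A t \ ⋃ k, B k t, G ω ∂μ) / F t‖
        = ‖∫ ω in A t \ ⋃ k, B k t, G ω ∂μ‖ / ‖F t‖ := norm_div _ _
      _ ≤ C * μ.real (A t \ ⋃ k, B k t) / ‖F t‖ := by
          gcongr
          exact norm_setIntegral_le_of_norm_le_const (measure_lt_top _ _) fun ω _ => hGC ω
      _ = C * ‖μ.real (A t \ ⋃ k, B k t) / F t‖ := by
          rw [norm_div, Real.norm_of_nonneg measureReal_nonneg, mul_div_assoc]
  have hsum := (tendsto_finsetSum Finset.univ fun k _ => hB k).add hD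
  rw [add_zero] at hsum
  refine hsum.congr' ?_
  filter_upwards [hdisj] with t ht
  rw [← Finset.sum_div, ← add_div,
    ← integral_iUnion_fintype (hBmeas · t) ht fun k => hG.integrableOn,
    setIntegral_sdiff (MeasurableSet.iUnion fun k => hBmeas k t) hG.integrableOn
      (Set.iUnion_subset fun k => hBA k t), add_sub_cancel]

end SetIntegral

lemma integral_cond_eq_div {Ω : Type*} [MeasurableSpace Ω] (μ : Measure Ω) (G : Ω → ℝ)
    (A : Set Ω) : ∫ ω, G ω ∂(μ[|A]) = (∫ ω in A, G ω ∂μ) / μ.real A := by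
  rw [ProbabilityTheory.cond, integral_smul_measure, ENNReal.toReal_inv, smul_eq_mul,
    inv_mul_eq_div]
  rfl

lemma integral_inv_smul_sum_smul_dirac {E κ : Type*} [MeasurableSpace E]
    [MeasurableSingletonClass E] [Fintype κ] (f : E → ℝ) {w : κ → ℝ} (hw : ∀ k, 0 ≤ w k)
    (x : κ → E) {c : ℝ} (hc : 0 ≤ c) :
    ∫ y, f y ∂((ENNReal.ofReal c)⁻¹ •
      Measure.sum fun k => ENNReal.ofReal (w k) • Measure.dirac (x k))
      = (∑ k, w k * f (x k)) / c := by
  rw [integral_smul_measure, Measure.sum_fintype, integral_finsetSum_measure fun k _ =>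
    (integrable_dirac enorm_lt_top).smul_measure ENNReal.ofReal_ne_top]
  simp only [integral_smul_measure, integral_dirac, ENNReal.toReal_ofReal (hw _),
    ENNReal.toReal_inv, ENNReal.toReal_ofReal hc, smul_eq_mul]
  rw [inv_mul_eq_div]

section MaxLinear

variable {d s : ℕ} [NeZero s]

def maxLinear (a : Fin d → Fin s → ℝ) (z : Fin s → ℝ) (j : Fin d) : ℝ :=
  Finset.univ.sup' Finset.univ_nonempty fun r => a j r * z r

variable {a : Fin d → Fin s → ℝ} {z : Fin s → ℝ} {i j : Fin d} {r : Fin s}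

lemma mul_le_maxLinear (a : Fin d → Fin s → ℝ) (z : Fin s → ℝ) (j : Fin d) (r : Fin s) :
    a j r * z r ≤ maxLinear a z j :=
  Finset.le_sup' (fun r => a j r * z r) (Finset.mem_univ r)

lemma lt_maxLinear_iff {t : ℝ} : t < maxLinear a z j ↔ ∃ r, t < a j r * z r := by
  simp [maxLinear, Finset.lt_sup'_iff]

lemma maxLinear_le_max {c : ℝ} (h : ∀ r' ≠ r, a j r' * z r' ≤ c) :
    maxLinear a z j ≤ max (a j r * z r) c :=
  Finset.sup'_le _ _ fun r' _ =>
    if hr : r' = r then hr ▸ le_max_left _ _ else (h r' hr).trans (le_max_right _ _)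

lemma dist_maxLinear_div_le (hann : ∀ j r, 0 ≤ a j r) {M : ℝ} (hM : ∀ j r, a j r ≤ M)
    {t K : ℝ} (hK : 0 ≤ K) (hzK : ∀ r' ≠ r, z r' ≤ K) (ht : 0 < t) (hMK : M * K ≤ t)
    (htr : t < a i r * z r) :
    dist (fun j => maxLinear a z j / maxLinear a z i) (fun j => a j r / a i r) ≤ M * K / t := by
  have hothers : ∀ j, ∀ r' ≠ r, a j r' * z r' ≤ M * K := fun j r' hr' =>
    (mul_le_mul_of_nonneg_left (hzK r' hr') (hann j r')).trans
      (mul_le_mul_of_nonneg_right (hM j r') hK)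
  have hpos : 0 < a i r * z r := ht.trans htr
  have hz : 0 < z r := pos_of_mul_pos_right hpos (hann i r)
  have hMK0 : 0 ≤ M * K := mul_nonneg ((hann i r).trans (hM i r)) hK
  have hxi : maxLinear a z i = a i r * z r :=
    le_antisymm ((maxLinear_le_max (hothers i)).trans (max_le le_rfl (hMK.trans htr.le)))
      (mul_le_maxLinear a z i r)
  refine (dist_pi_le_iff (div_nonneg hMK0 ht.le)).2 fun j => ?_
  have hlow := mul_le_maxLinear a z j r
  have hup : maxLinear a z j ≤ a j r * z r + M * K :=
    (maxLinear_le_max (hothers j)).trans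
      (max_le (by linarith) (by linarith [mul_nonneg (hann j r) hz.le]))
  rw [Real.dist_eq, hxi, ← mul_div_mul_right (a j r) (a i r) hz.ne', ← sub_div, abs_div,
    abs_of_pos hpos, abs_of_nonneg (by linarith)]
  exact div_le_div₀ hMK0 (by linarith) ht htr.le

end MaxLinear

section Tails

variable {Ω : Type*} [MeasurableSpace Ω] {μ : Measure Ω}

lemma tendsto_measureReal_lt_atTop_zero [IsFiniteMeasure μ] {Y : Ω → ℝ} (hY : Measurable Y) :
    Tendsto (fun t => μ.real {ω | t < Y ω}) atTop (𝓝 0) := by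
  have h := tendsto_measure_iInter_atTop (μ := μ) (s := fun t : ℝ => {ω | t < Y ω})
    (fun t => (hY measurableSet_Ioi).nullMeasurableSet)
    (fun t u htu ω hω => htu.trans_lt hω) ⟨0, measure_ne_top μ _⟩
  have hempty : (⋂ t : ℝ, {ω | t < Y ω}) = ∅ :=
    Set.eq_empty_of_forall_notMem fun ω hω => lt_irrefl (Y ω) (Set.mem_iInter.1 hω (Y ω))
  rw [hempty, measure_empty] at h
  exact (ENNReal.tendsto_toReal ENNReal.zero_ne_top).comp h

lemma ProbabilityTheory.IdentDistrib.measureReal_lt_eq {Y Y₀ : Ω → ℝ}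
    (h : IdentDistrib Y Y₀ μ μ) (u : ℝ) :
    μ.real {ω | u < Y ω} = μ.real {ω | u < Y₀ ω} :=
  congrArg ENNReal.toReal (h.measure_mem_eq measurableSet_Ioi)

lemma RegularlyVarying.tendsto_measureReal_lt_mul_div {Y Y₀ : Ω → ℝ} {α b : ℝ}
    (hlaw : IdentDistrib Y Y₀ μ μ) (hα : 0 < α)
    (hF : RegularlyVarying (fun t => μ.real {ω | t < Y₀ ω}) (-α)) (hb : 0 ≤ b) :
    Tendsto (fun t => μ.real {ω | t < b * Y ω} / μ.real {ω | t < Y₀ ω}) atTop (𝓝 (b ^ α)) := by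
  rcases hb.eq_or_lt with rfl | hb
  · rw [Real.zero_rpow hα.ne']
    refine tendsto_const_nhds.congr' ?_
    filter_upwards [eventually_ge_atTop 0] with t ht
    simp [not_lt.2 ht]
  · refine (hF.tendsto_inv_mul_div hb).congr fun t => ?_
    have hset : {ω | t < b * Y ω} = Y ⁻¹' Set.Ioi (b⁻¹ * t) := by
      ext ω
      simp [inv_mul_lt_iff₀ hb]
    rw [hset, ← hlaw.measureReal_lt_eq]
    rfl

end Tails

section SingleBigJump

variable {Ω : Type*} {s : ℕ} {Z : Fin s → Ω → ℝ}

def singleBigJump (Z : Fin s → Ω → ℝ) (b : ℝ) (r : Fin s) (t K : ℝ) : Set Ω :=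
  {ω | t < b * Z r ω} ∩ ⋂ r' ∈ Finset.univ.erase r, {ω | Z r' ω ≤ K}

lemma singleBigJump_subset (b : ℝ) (r : Fin s) (t K : ℝ) :
    singleBigJump Z b r t K ⊆ {ω | t < b * Z r ω} :=
  Set.inter_subset_left

lemma measurableSet_singleBigJump [MeasurableSpace Ω] (hZmeas : ∀ r, Measurable (Z r)) (b : ℝ)
    (r : Fin s) (t K : ℝ) : MeasurableSet (singleBigJump Z b r t K) :=
  (measurableSet_lt measurable_const ((hZmeas r).const_mul b)).inter
    (Finset.measurableSet_biInter _ fun r' _ => measurableSet_le (hZmeas r') measurable_const)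

lemma sdiff_singleBigJump_subset (b : ℝ) (r : Fin s) (t K : ℝ) :
    {ω | t < b * Z r ω} \ singleBigJump Z b r t K
      ⊆ ⋃ r' ∈ Finset.univ.erase r, {ω | t < b * Z r ω} ∩ {ω | K < Z r' ω} := by
  rintro ω ⟨hE, hB⟩
  simp only [singleBigJump, Set.mem_inter_iff, hE, true_and, Set.mem_iInter,
    not_forall] at hB
  obtain ⟨r', hr', hK⟩ := hB
  exact Set.mem_biUnion hr' ⟨hE, show K < Z r' ω from not_le.1 hK⟩

lemma pairwise_disjoint_singleBigJump {b : Fin s → ℝ} (hb : ∀ r, 0 ≤ b r) {M : ℝ}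
    (hM : ∀ r, b r ≤ M) {t K : ℝ} (hK : 0 ≤ K) (hMK : M * K ≤ t) :
    Pairwise (Function.onFun Disjoint fun r => singleBigJump Z (b r) r t K) := by
  intro r r' hrr'
  refine Set.disjoint_left.2 fun ω hω hω' => ?_
  have hZK : Z r ω ≤ K :=
    Set.mem_iInter₂.1 hω'.2 r (Finset.mem_erase.2 ⟨hrr', Finset.mem_univ r⟩)
  have : b r * Z r ω ≤ M * K :=
    (mul_le_mul_of_nonneg_left hZK (hb r)).trans (mul_le_mul_of_nonneg_right (hM r) hK)
  exact (hω.1.trans_le this).not_ge hMK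

variable [MeasurableSpace Ω] {μ : Measure Ω} [NeZero s] [IsFiniteMeasure μ] {α b : ℝ} {K : ℝ → ℝ}

lemma tendsto_measureReal_inter_lt_div (hZmeas : ∀ r, Measurable (Z r))
    (hZindep : iIndepFun Z μ) (hZid : ∀ r, IdentDistrib (Z r) (Z 0) μ μ) (hα : 0 < α)
    (hFbar : RegularlyVarying (fun t => μ.real {ω | t < Z 0 ω}) (-α)) (hb : 0 ≤ b)
    {r r' : Fin s} (hrr' : r ≠ r') (hK : Tendsto K atTop atTop) :
    Tendsto (fun t => μ.real ({ω | t < b * Z r ω} ∩ {ω | K t < Z r' ω}) /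
      μ.real {ω | t < Z 0 ω}) atTop (𝓝 0) := by
  have hmul : ∀ t, μ.real ({ω | t < b * Z r ω} ∩ {ω | K t < Z r' ω})
      = μ.real {ω | t < b * Z r ω} * μ.real {ω | K t < Z 0 ω} := by
    intro t
    have h : μ ({ω | t < b * Z r ω} ∩ {ω | K t < Z r' ω})
        = μ {ω | t < b * Z r ω} * μ {ω | K t < Z r' ω} :=
      (hZindep.indepFun hrr').measure_inter_preimage_eq_mul _ _
        (measurableSet_lt measurable_const (measurable_const_mul b)) measurableSet_Ioi
    rw [measureReal_def, h, ENNReal.toReal_mul, ← (hZid r').measureReal_lt_eq]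
    rfl
  simpa [hmul, mul_div_right_comm] using
    (hFbar.tendsto_measureReal_lt_mul_div (hZid r) hα hb).mul
      ((tendsto_measureReal_lt_atTop_zero (hZmeas 0)).comp hK)

lemma tendsto_measureReal_sdiff_singleBigJump_div (hZmeas : ∀ r, Measurable (Z r))
    (hZindep : iIndepFun Z μ) (hZid : ∀ r, IdentDistrib (Z r) (Z 0) μ μ) (hα : 0 < α)
    (hFbar : RegularlyVarying (fun t => μ.real {ω | t < Z 0 ω}) (-α)) (hb : 0 ≤ b) (r : Fin s)
    (hK : Tendsto K atTop atTop) :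
    Tendsto (fun t => μ.real ({ω | t < b * Z r ω} \ singleBigJump Z b r t (K t)) /
      μ.real {ω | t < Z 0 ω}) atTop (𝓝 0) := by
  have hsum : Tendsto (fun t => ∑ r' ∈ Finset.univ.erase r,
      μ.real ({ω | t < b * Z r ω} ∩ {ω | K t < Z r' ω}) / μ.real {ω | t < Z 0 ω}) atTop (𝓝 0) := by
    simpa using tendsto_finsetSum (Finset.univ.erase r) fun r' hr' =>
      tendsto_measureReal_inter_lt_div hZmeas hZindep hZid hα hFbar hb
        (Finset.ne_of_mem_erase hr').symm hK
  refine squeeze_zero (fun t => by positivity) (fun t => ?_) hsum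
  rw [← Finset.sum_div]
  refine div_le_div_of_nonneg_right ?_ measureReal_nonneg
  exact (measureReal_mono (sdiff_singleBigJump_subset b r t (K t)) (measure_ne_top μ _)).trans
    (measureReal_biUnion_finset_le _ _)

lemma tendsto_measureReal_singleBigJump_div (hZmeas : ∀ r, Measurable (Z r))
    (hZindep : iIndepFun Z μ) (hZid : ∀ r, IdentDistrib (Z r) (Z 0) μ μ) (hα : 0 < α)
    (hFbar : RegularlyVarying (fun t => μ.real {ω | t < Z 0 ω}) (-α)) (hb : 0 ≤ b) (r : Fin s)
    (hK : Tendsto K atTop atTop) :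
    Tendsto (fun t => μ.real (singleBigJump Z b r t (K t)) / μ.real {ω | t < Z 0 ω}) atTop
      (𝓝 (b ^ α)) := by
  have hdiff : ∀ t, μ.real (singleBigJump Z b r t (K t)) / μ.real {ω | t < Z 0 ω}
      = μ.real {ω | t < b * Z r ω} / μ.real {ω | t < Z 0 ω}
        - μ.real ({ω | t < b * Z r ω} \ singleBigJump Z b r t (K t)) / μ.real {ω | t < Z 0 ω} := by
    intro t
    rw [measureReal_sdiff (singleBigJump_subset b r t (K t))
      (measurableSet_singleBigJump hZmeas b r t (K t)),
      sub_div, sub_sub_cancel]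
  simpa [hdiff] using (hFbar.tendsto_measureReal_lt_mul_div (hZid r) hα hb).sub
    (tendsto_measureReal_sdiff_singleBigJump_div hZmeas hZindep hZid hα hFbar hb r hK)

end SingleBigJump

section Model

variable {Ω : Type*} [MeasurableSpace Ω] {μ : Measure Ω} [IsFiniteMeasure μ] {d s : ℕ} [NeZero s]
  {Z : Fin s → Ω → ℝ} {α : ℝ} {a : Fin d → Fin s → ℝ}

lemma measurable_maxLinear (hZmeas : ∀ r, Measurable (Z r)) (a : Fin d → Fin s → ℝ)
    (j : Fin d) : Measurable fun ω => maxLinear a (fun r => Z r ω) j := by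
  convert Finset.measurable_sup' Finset.univ_nonempty fun r _ => (hZmeas r).const_mul (a j r)
    using 1
  ext ω
  exact (Finset.sup'_apply (f := fun r ω => a j r * Z r ω) _ ω).symm

lemma tendsto_measureReal_sdiff_iUnion_singleBigJump_div (hZmeas : ∀ r, Measurable (Z r))
    (hZindep : iIndepFun Z μ) (hZid : ∀ r, IdentDistrib (Z r) (Z 0) μ μ) (hα : 0 < α)
    (hFbar : RegularlyVarying (fun t => μ.real {ω | t < Z 0 ω}) (-α))
    (hann : ∀ j r, 0 ≤ a j r) (i : Fin d) {K : ℝ → ℝ} (hK : Tendsto K atTop atTop) :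
    Tendsto (fun t => μ.real ({ω | t < maxLinear a (fun r => Z r ω) i} \
      ⋃ r, singleBigJump Z (a i r) r t (K t)) / μ.real {ω | t < Z 0 ω}) atTop (𝓝 0) := by
  have hsum := tendsto_finsetSum Finset.univ fun r _ =>
    tendsto_measureReal_sdiff_singleBigJump_div hZmeas hZindep hZid hα hFbar (hann i r) r hK
  refine squeeze_zero (fun t => by positivity) (fun t => ?_) (by simpa using hsum)
  rw [← Finset.sum_div]
  refine div_le_div_of_nonneg_right ?_ measureReal_nonneg
  refine (measureReal_mono ?_ (measure_ne_top μ _)).trans (measureReal_iUnion_fintype_le _)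
  rintro ω ⟨hω, hωB⟩
  obtain ⟨r, hr⟩ := lt_maxLinear_iff.1 hω
  exact Set.mem_iUnion.2 ⟨r, hr, fun h => hωB (Set.mem_iUnion.2 ⟨r, h⟩)⟩

theorem tendsto_setIntegral_div_of_maxLinear (hZmeas : ∀ r, Measurable (Z r))
    (hZindep : iIndepFun Z μ) (hZid : ∀ r, IdentDistrib (Z r) (Z 0) μ μ) (hα : 0 < α)
    (hFbar : RegularlyVarying (fun t => μ.real {ω | t < Z 0 ω}) (-α))
    (hann : ∀ j r, 0 ≤ a j r) {X : Ω → Fin d → ℝ}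
    (hX : ∀ ω j, X ω j = maxLinear a (fun r => Z r ω) j) (i : Fin d)
    (g : BoundedContinuousFunction (Fin d → ℝ) ℝ) :
    Tendsto (fun t => (∫ ω in {ω | t < X ω i}, g (fun j => X ω j / X ω i) ∂μ) /
      μ.real {ω | t < Z 0 ω}) atTop (𝓝 (∑ r, a i r ^ α * g (fun j => a j r / a i r))) := by
  obtain ⟨M, hM⟩ := Finite.exists_le (Function.uncurry a)
  have hXmeas : ∀ j, Measurable fun ω => X ω j := fun j => by
    simpa only [hX] using measurable_maxLinear hZmeas a j
  have hG : Integrable (fun ω => g (fun j => X ω j / X ω i)) μ :=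
    (g.integrable _).comp_measurable (measurable_pi_lambda _ fun j => (hXmeas j).div (hXmeas i))
  -- Cut-off `K = √t`: as `K → ∞` the other factors rarely exceed it, and as `K / t → 0` they do
  -- not affect `X / X_i` in the limit.
  have hMK : ∀ᶠ t in atTop, M * √t ≤ t := by
    filter_upwards [Real.tendsto_sqrt_atTop.eventually_ge_atTop M, eventually_ge_atTop 0]
      with t hM ht
    calc M * √t ≤ √t * √t := mul_le_mul_of_nonneg_right hM (Real.sqrt_nonneg t)
      _ = t := Real.mul_self_sqrt ht
  have hMK_div : Tendsto (fun t => M * √t / t) atTop (𝓝 0) := by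
    simpa [mul_div_assoc, Real.sqrt_div_self'] using
      (tendsto_inv_atTop_zero.comp Real.tendsto_sqrt_atTop).const_mul M
  have hrest : Tendsto (fun t => μ.real ({ω | t < X ω i} \
      ⋃ r, singleBigJump Z (a i r) r t √t) / μ.real {ω | t < Z 0 ω}) atTop (𝓝 0) := by
    simpa only [hX] using tendsto_measureReal_sdiff_iUnion_singleBigJump_div hZmeas hZindep
      hZid hα hFbar hann i Real.tendsto_sqrt_atTop
  refine tendsto_setIntegral_div_of_pairwise_disjoint hG (fun ω => g.norm_coe_le_norm _)
    (B := fun r t => singleBigJump Z (a i r) r t √t)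
    (fun r t => measurableSet_singleBigJump hZmeas _ r t _)
    (fun r t ω hω => show t < X ω i from hX ω i ▸ hω.1.trans_le (mul_le_maxLinear a _ i r))
    (hMK.mono fun t ht => pairwise_disjoint_singleBigJump (hann i) (hM ⟨i, ·⟩)
      (Real.sqrt_nonneg t) ht)
    hrest fun r => ?_
  refine tendsto_setIntegral_div_of_forall_dist_le hG (tendsto_measureReal_singleBigJump_div
    hZmeas hZindep hZid hα hFbar (hann i r) r Real.tendsto_sqrt_atTop) fun ε hε => ?_
  obtain ⟨δ, hδ, hgδ⟩ := Metric.continuous_iff.1 g.continuous (fun j => a j r / a i r) ε hε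
  filter_upwards [hMK_div.eventually (gt_mem_nhds hδ), eventually_gt_atTop 0, hMK]
    with t hδt ht hMKt ω hω
  have hdist := dist_maxLinear_div_le hann (fun j r => hM (j, r)) (Real.sqrt_nonneg t)
    (fun r' hr' => Set.mem_iInter₂.1 hω.2 r' (Finset.mem_erase.2 ⟨hr', Finset.mem_univ r'⟩))
    ht hMKt hω.1
  simp only [hX]
  exact (hgδ _ (hdist.trans_lt hδt)).le

end Model

theorem max_linear_tail_limits_general
    {d s : ℕ} [NeZero s]
    {Ω : Type*} [MeasurableSpace Ω] (μ : Measure Ω) [IsProbabilityMeasure μ]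
    (Z : Fin s → Ω → ℝ) (hZmeas : ∀ r, Measurable (Z r))
    (hZindep : iIndepFun Z μ)
    (hZid : ∀ r : Fin s, μ.map (Z r) = μ.map (Z 0))
    (α : ℝ) (hα : 0 < α)
    (hFbar : RegularlyVarying (fun t => (μ {ω | t < Z 0 ω}).toReal) (-α))
    (a : Fin d → Fin s → ℝ) (hann : ∀ i r, 0 ≤ a i r)
    (hamax : ∀ i, ∃ r, 0 < a i r)
    (X : Ω → Fin d → ℝ)
    (hX : ∀ ω i, X ω i = Finset.univ.sup' Finset.univ_nonempty (fun r => a i r * Z r ω)) :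
    (∀ i : Fin d,
      Tendsto (fun t => (μ {ω | t < X ω i}).toReal / (μ {ω | t < Z 0 ω}).toReal)
        atTop (𝓝 (∑ r : Fin s, (a i r) ^ α))) ∧
    (∀ i : Fin d,
      ∀ f : BoundedContinuousFunction (Fin d → ℝ) ℝ,
        Tendsto (fun t => ∫ ω, f (fun j => X ω j / X ω i) ∂(μ[|{ω | t < X ω i}])) atTop
          (𝓝 (∫ x, f x
            ∂((ENNReal.ofReal (∑ r : Fin s, (a i r) ^ α))⁻¹ •
              (Measure.sum (fun r : Fin s =>
                ENNReal.ofReal ((a i r) ^ α) •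
                  Measure.dirac (fun j => a j r / a i r))))))) := by
  have hlim := tendsto_setIntegral_div_of_maxLinear hZmeas hZindep
    (fun r => ⟨(hZmeas r).aemeasurable, (hZmeas 0).aemeasurable, hZid r⟩) hα hFbar hann hX
  have htail : ∀ i, Tendsto (fun t => μ.real {ω | t < X ω i} / μ.real {ω | t < Z 0 ω}) atTop
      (𝓝 (∑ r, a i r ^ α)) := fun i => by
    simpa using hlim i (BoundedContinuousFunction.const _ 1)
  refine ⟨htail, fun i f => ?_⟩
  have hc : 0 < ∑ r, a i r ^ α := by
    obtain ⟨r, hr⟩ := hamax i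
    exact Finset.sum_pos' (fun r _ => Real.rpow_nonneg (hann i r) α)
      ⟨r, Finset.mem_univ r, Real.rpow_pos_of_pos hr α⟩
  rw [integral_inv_smul_sum_smul_dirac _ (fun r => Real.rpow_nonneg (hann i r) α) _ hc.le]
  refine ((hlim i f).div (htail i) hc.ne').congr' ?_
  filter_upwards [hFbar.1] with t (ht : 0 < μ.real {ω | t < Z 0 ω})
  rw [Pi.div_apply, div_div_div_cancel_right₀ ht.ne', integral_cond_eq_div]

/-- Example `ex:maxlinear`: for the max-linear model
`X_i = max_r a_{i,r} Z_r` built from i.i.d. nonnegative factors with regularly varying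
tail of index `-α`, the marginal tails satisfy `P(X_i > t)/F̄(t) → c_i = Σ_r a_{i,r}^α`,
and the conditional law of `X/X_i` given `X_i > t` converges weakly to the discrete law
`(1/c_i) Σ_r a_{i,r}^α δ_{(a_{j,r}/a_{i,r})_j}`. -/
theorem max_linear_tail_limits
    {d s : ℕ} [NeZero s]
    {Ω : Type*} [MeasurableSpace Ω] (μ : Measure Ω) [IsProbabilityMeasure μ]
    (Z : Fin s → Ω → ℝ) (hZmeas : ∀ r, Measurable (Z r)) (hZnn : ∀ r ω, 0 ≤ Z r ω)
    (hZindep : iIndepFun Z μ)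
    (hZid : ∀ r : Fin s, μ.map (Z r) = μ.map (Z 0))
    (α : ℝ) (hα : 0 < α)
    (hFbar : RegularlyVarying (fun t => (μ {ω | t < Z 0 ω}).toReal) (-α))
    (a : Fin d → Fin s → ℝ) (hann : ∀ i r, 0 ≤ a i r)
    (hamax : ∀ i, ∃ r, 0 < a i r)
    (X : Ω → Fin d → ℝ)
    (hX : ∀ ω i, X ω i = Finset.univ.sup' Finset.univ_nonempty (fun r => a i r * Z r ω)) :
    (∀ i : Fin d,
      Tendsto (fun t => (μ {ω | t < X ω i}).toReal / (μ {ω | t < Z 0 ω}).toReal)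
        atTop (𝓝 (∑ r : Fin s, (a i r) ^ α))) ∧
    (∀ i : Fin d,
      ∀ f : BoundedContinuousFunction (Fin d → ℝ) ℝ,
        Tendsto (fun t => ∫ ω, f (fun j => X ω j / X ω i) ∂(μ[|{ω | t < X ω i}])) atTop
          (𝓝 (∫ x, f x
            ∂((ENNReal.ofReal (∑ r : Fin s, (a i r) ^ α))⁻¹ •
              (Measure.sum (fun r : Fin s =>
                ENNReal.ofReal ((a i r) ^ α) •
                  Measure.dirac (fun j => a j r / a i r))))))) :=
  max_linear_tail_limits_general μ Z hZmeas hZindep hZid α hα hFbar a hann hamax X hX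
end
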